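/- arXiv:2402.00289 — 6 statements merged into one kernel-verified Lean document; each statement's English description precedes it below -/
import Mathlib

section
/- For every τ ∈ {0,1,…,T}, the dual value function dominates the conjugate of the primal value function and vice versa: ω_τ(η) ≥ ϑ_τ*(η) for all η ∈ ℝⁿ and ϑ_τ(ξ) ≥ ω_τ*(ξ) for all ξ ∈ ℝⁿ, where φ* denotes the Legendre–Fenchel conjugate of φ. -/
open Matrix Finset

noncomputable section

/-- Legendre–Fenchel conjugate of an extended-real-valued function on `ℝⁿ`. -/
def eConj {n : ℕ} (φ : (Fin n → ℝ) → EReal) (y : Fin n → ℝ) : EReal :=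
  ⨆ x : Fin n → ℝ, ((x ⬝ᵥ y : ℝ) : EReal) - φ x

/-- A function is proper if it is not identically `+∞` and never takes the value `-∞`. -/
def ProperFn {n : ℕ} (φ : (Fin n → ℝ) → EReal) : Prop :=
  (∃ x, φ x ≠ ⊤) ∧ ∀ x, φ x ≠ ⊥

/-- Convexity of an extended-real-valued function, via convexity of its epigraph. -/
def ConvexFn {n : ℕ} (φ : (Fin n → ℝ) → EReal) : Prop :=
  Convex ℝ {q : (Fin n → ℝ) × ℝ | φ q.1 ≤ (q.2 : EReal)}

/-- Properness for a function of two vector variables. -/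
def ProperFn2 {n : ℕ} (Λ : (Fin n → ℝ) → (Fin n → ℝ) → EReal) : Prop :=
  (∃ x v, Λ x v ≠ ⊤) ∧ ∀ x v, Λ x v ≠ ⊥

/-- Convexity (via the epigraph) for a function of two vector variables. -/
def ConvexFn2 {n : ℕ} (Λ : (Fin n → ℝ) → (Fin n → ℝ) → EReal) : Prop :=
  Convex ℝ {q : ((Fin n → ℝ) × (Fin n → ℝ)) × ℝ | Λ q.1.1 q.1.2 ≤ (q.2 : EReal)}

/-- Lower semicontinuity for a function of two vector variables. -/
def LscFn2 {n : ℕ} (Λ : (Fin n → ℝ) → (Fin n → ℝ) → EReal) : Prop :=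
  LowerSemicontinuous (fun q : (Fin n → ℝ) × (Fin n → ℝ) => Λ q.1 q.2)

/-- Effective domain. -/
def edom {n : ℕ} (φ : (Fin n → ℝ) → EReal) : Set (Fin n → ℝ) := {x | φ x ≠ ⊤}

/-- Relative interior of a set in `ℝⁿ`: points of the set around which the set is a
neighbourhood within the affine span of the set. -/
def relint {n : ℕ} (S : Set (Fin n → ℝ)) : Set (Fin n → ℝ) :=
  {x ∈ S | S ∈ nhdsWithin x (affineSpan ℝ S : Set (Fin n → ℝ))}

/-- The convex subdifferential of an extended-real-valued function. -/
def subdiff {n : ℕ} (φ : (Fin n → ℝ) → EReal) (x : Fin n → ℝ) : Set (Fin n → ℝ) :=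
  {y | ∀ z, φ x + ((y ⬝ᵥ (z - x) : ℝ) : EReal) ≤ φ z}

/-- The dual Lagrangian `K_t(p,w) = sup_{x,v} { x·w + v·p − L_t(x,v) }`. -/
def dualL {n : ℕ} (L : ℕ → (Fin n → ℝ) → (Fin n → ℝ) → EReal) (t : ℕ)
    (p w : Fin n → ℝ) : EReal :=
  ⨆ x : Fin n → ℝ, ⨆ v : Fin n → ℝ, ((x ⬝ᵥ w + v ⬝ᵥ p : ℝ) : EReal) - L t x v

/-- The dual terminal cost `f(b) = g*(−b)`. -/
def dualF {n : ℕ} (g : (Fin n → ℝ) → EReal) (b : Fin n → ℝ) : EReal := eConj g (-b)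

/-- Primal value function `ϑ_τ(ξ)` of the discrete-time Bolza problem. -/
def primalVal {n : ℕ} (T : ℕ) (L : ℕ → (Fin n → ℝ) → (Fin n → ℝ) → EReal)
    (g : (Fin n → ℝ) → EReal) (τ : ℕ) (ξ : Fin n → ℝ) : EReal :=
  ⨅ x : {x : ℕ → Fin n → ℝ // x τ = ξ},
    (∑ t ∈ Finset.Icc (τ + 1) T, L t (x.1 (t - 1)) (x.1 t - x.1 (t - 1))) + g (x.1 T)

/-- Dual value function `ω_τ(η)` of the dual discrete-time Bolza problem. -/
def dualVal {n : ℕ} (T : ℕ) (L : ℕ → (Fin n → ℝ) → (Fin n → ℝ) → EReal)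
    (g : (Fin n → ℝ) → EReal) (τ : ℕ) (η : Fin n → ℝ) : EReal :=
  ⨅ p : {p : ℕ → Fin n → ℝ // p τ = -η},
    (∑ t ∈ Finset.Icc (τ + 1) T, dualL L t (p.1 t) (p.1 t - p.1 (t - 1))) + dualF g (p.1 T)

/-- Feasible velocities of the primal system: `Γ_L(t,x) = {v : L_t(x,v) ∈ ℝ}`. -/
def GammaL {n : ℕ} (L : ℕ → (Fin n → ℝ) → (Fin n → ℝ) → EReal) (t : ℕ)
    (x : Fin n → ℝ) : Set (Fin n → ℝ) :=
  {v | ∃ r : ℝ, L t x v = (r : EReal)}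

/-- Implicit state constraint of the primal system: `𝐗(t) = {x : Γ_L(t,x) ≠ ∅}`. -/
def XX {n : ℕ} (L : ℕ → (Fin n → ℝ) → (Fin n → ℝ) → EReal) (t : ℕ) : Set (Fin n → ℝ) :=
  {x | (GammaL L t x).Nonempty}

/-- Feasible velocities of the dual system: `Γ_K(t,p) = {w : K_t(p+w,w) ∈ ℝ}`. -/
def GammaK {n : ℕ} (L : ℕ → (Fin n → ℝ) → (Fin n → ℝ) → EReal) (t : ℕ)
    (p : Fin n → ℝ) : Set (Fin n → ℝ) :=
  {w | ∃ r : ℝ, dualL L t (p + w) w = (r : EReal)}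

/-- Implicit state constraint of the dual system: `𝐏(t) = {p : Γ_K(t,p) ≠ ∅}`. -/
def PP {n : ℕ} (L : ℕ → (Fin n → ℝ) → (Fin n → ℝ) → EReal) (t : ℕ) : Set (Fin n → ℝ) :=
  {p | (GammaK L t p).Nonempty}

/-- Qualification condition (H) over the primal problem. -/
def HypH {n : ℕ} (T : ℕ) (L : ℕ → (Fin n → ℝ) → (Fin n → ℝ) → EReal)
    (g : (Fin n → ℝ) → EReal) : Prop :=
  ∃ xb : ℕ → Fin n → ℝ, xb T ∈ relint (edom g) ∧
    ∀ t, 1 ≤ t → t ≤ T →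
      xb (t - 1) ∈ relint (XX L t) ∧ xb t - xb (t - 1) ∈ relint (GammaL L t (xb (t - 1)))

/-- Qualification condition (H') over the dual problem. -/
def HypH' {n : ℕ} (T : ℕ) (L : ℕ → (Fin n → ℝ) → (Fin n → ℝ) → EReal)
    (g : (Fin n → ℝ) → EReal) : Prop :=
  ∃ pb : ℕ → Fin n → ℝ, pb T ∈ relint (edom (dualF g)) ∧
    ∀ t, 1 ≤ t → t ≤ T →
      pb (t - 1) ∈ relint (PP L t) ∧ pb t - pb (t - 1) ∈ relint (GammaK L t (pb (t - 1)))

/-- The Hamiltonian `H_t(x,p) = sup_v { p·v − L_t(x,v) }`. -/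
def Ham {n : ℕ} (L : ℕ → (Fin n → ℝ) → (Fin n → ℝ) → EReal) (t : ℕ)
    (x p : Fin n → ℝ) : EReal :=
  ⨆ v : Fin n → ℝ, ((p ⬝ᵥ v : ℝ) : EReal) - L t x v

/-- `{(x_t,p_t)}` is a discrete-time Hamiltonian trajectory on `[τ,T]`:
`(−Δp_t, Δx_t) ∈ ∂H_t(x_{t−1}, p_t)` for `t = τ+1,…,T`, where `∂H_t` is the
concave-convex subdifferential of the Hamiltonian. -/
def IsHamTraj {n : ℕ} (T : ℕ) (L : ℕ → (Fin n → ℝ) → (Fin n → ℝ) → EReal)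
    (τ : ℕ) (x p : ℕ → Fin n → ℝ) : Prop :=
  ∀ t, τ + 1 ≤ t → t ≤ T →
    (∀ y : Fin n → ℝ,
        Ham L t y (p t) + (((p t - p (t - 1)) ⬝ᵥ (y - x (t - 1)) : ℝ) : EReal)
          ≤ Ham L t (x (t - 1)) (p t)) ∧
    (∀ q : Fin n → ℝ,
        Ham L t (x (t - 1)) (p t)
          ≤ Ham L t (x (t - 1)) q - (((x t - x (t - 1)) ⬝ᵥ (q - p t) : ℝ) : EReal))

end

/-
Weak duality, stage by stage.  For any primal trajectory `x` and dual trajectory `p`, the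
Fenchel–Young inequalities `x_{t-1}·Δp_t + Δx_t·p_t ≤ L_t(x_{t-1}, Δx_t) + K_t(p_t, Δp_t)` and
`x_T·(-p_T) ≤ g(x_T) + f(p_T)` add up, and the left-hand sides telescope to `x_τ·(-p_τ)`.
Taking infima over trajectories with `x_τ = ξ`, `p_τ = -η` gives `ξ·η - ϑ_τ(ξ) ≤ ω_τ(η)`, which
is both conjugate inequalities at once. (The additive form `ξ·η ≤ ϑ_τ(ξ) + ω_τ(η)` can fail in
`EReal`, where `⊤ + ⊥ = ⊥`.)
-/

theorem Finset.sum_Icc_sub_pred {M : Type*} [AddCommGroup M] {m n : ℕ} (h : m ≤ n) (F : ℕ → M) :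
    ∑ t ∈ Icc (m + 1) n, (F t - F (t - 1)) = F n - F m := by
  rw [← Ico_add_one_right_eq_Icc, ← sum_Ico_add' (fun t => F t - F (t - 1))]
  simp only [Nat.add_sub_cancel]
  exact sum_Ico_sub F h

namespace EReal

theorem coe_finset_sum {ι : Type*} (s : Finset ι) (f : ι → ℝ) :
    ((∑ i ∈ s, f i : ℝ) : EReal) = ∑ i ∈ s, (f i : EReal) :=
  map_sum (⟨⟨(↑), coe_zero⟩, coe_add⟩ : ℝ →+ EReal) f s

theorem coe_sub_le_comm (a : ℝ) {b c : EReal} (h : (a : EReal) - b ≤ c) :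
    (a : EReal) - c ≤ b := by
  induction b <;> induction c <;> simp_all [← coe_sub]
  linarith

theorem coe_sub_iInf_le_iInf {ι κ : Sort*} {a : ℝ} {P : ι → EReal} {D : κ → EReal}
    (h : ∀ i k, (a : EReal) ≤ P i + D k) : (a : EReal) - ⨅ i, P i ≤ ⨅ k, D k :=
  coe_sub_le_comm a <| le_iInf fun i =>
    coe_sub_le_comm a <| le_iInf fun k => sub_le_of_le_add' (h i k)

/-- Fenchel–Young inequality for a conjugate-type supremum `⨆ j, c j - F j`. -/
theorem coe_le_add_iSup_coe_sub {ι : Sort*} {c : ι → ℝ} {F : ι → EReal} (hF : ∀ i, F i ≠ ⊥)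
    (hdom : ∃ j, F j ≠ ⊤) (i : ι) : (c i : EReal) ≤ F i + ⨆ j, ((c j : EReal) - F j) := by
  obtain ⟨j, hj⟩ := hdom
  have hsup : ⨆ j, ((c j : EReal) - F j) ≠ ⊥ := by
    refine ne_bot_of_le_ne_bot ?_ (le_iSup (fun j => (c j : EReal) - F j) j)
    lift F j to ℝ using ⟨hj, hF j⟩ with r
    exact coe_ne_bot (c j - r)
  rw [add_comm, ← sub_le_iff_le_add (.inl (hF i)) (.inr hsup)]
  exact le_iSup (fun j => (c j : EReal) - F j) i

end EReal

section BolzaDuality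

variable {n : ℕ} (T : ℕ) (L : ℕ → (Fin n → ℝ) → (Fin n → ℝ) → EReal) (g : (Fin n → ℝ) → EReal)

noncomputable def primalCost (τ : ℕ) (x : ℕ → Fin n → ℝ) : EReal :=
  (∑ t ∈ Icc (τ + 1) T, L t (x (t - 1)) (x t - x (t - 1))) + g (x T)

noncomputable def dualCost (τ : ℕ) (p : ℕ → Fin n → ℝ) : EReal :=
  (∑ t ∈ Icc (τ + 1) T, dualL L t (p t) (p t - p (t - 1))) + dualF g (p T)

variable {T L g}

theorem coe_le_add_dualL {t : ℕ} (hL : ProperFn2 (L t)) (x v p w : Fin n → ℝ) :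
    ((x ⬝ᵥ w + v ⬝ᵥ p : ℝ) : EReal) ≤ L t x v + dualL L t p w := by
  obtain ⟨⟨x₀, v₀, hdom⟩, hbot⟩ := hL
  refine (EReal.coe_le_add_iSup_coe_sub (c := fun q => q.1 ⬝ᵥ w + q.2 ⬝ᵥ p)
    (F := fun q => L t q.1 q.2) (fun q => hbot q.1 q.2) ⟨(x₀, v₀), hdom⟩ (x, v)).trans_eq ?_
  rw [iSup_prod]
  rfl

theorem coe_le_add_dualF (hg : ProperFn g) (x b : Fin n → ℝ) :
    ((x ⬝ᵥ -b : ℝ) : EReal) ≤ g x + dualF g b :=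
  EReal.coe_le_add_iSup_coe_sub (c := fun y => y ⬝ᵥ -b) hg.2 hg.1 x

theorem coe_le_primalCost_add_dualCost (hL : ∀ t, 1 ≤ t → t ≤ T → ProperFn2 (L t))
    (hg : ProperFn g) {τ : ℕ} (hτ : τ ≤ T) (x p : ℕ → Fin n → ℝ) :
    ((x τ ⬝ᵥ -p τ : ℝ) : EReal) ≤ primalCost T L g τ x + dualCost T L g τ p := by
  have hstages : ((∑ t ∈ Icc (τ + 1) T,
      (x (t - 1) ⬝ᵥ (p t - p (t - 1)) + (x t - x (t - 1)) ⬝ᵥ p t) : ℝ) : EReal) ≤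
      ∑ t ∈ Icc (τ + 1) T,
        (L t (x (t - 1)) (x t - x (t - 1)) + dualL L t (p t) (p t - p (t - 1))) := by
    rw [EReal.coe_finset_sum]
    refine sum_le_sum fun t ht => ?_
    obtain ⟨ht₁, ht₂⟩ := mem_Icc.mp ht
    exact coe_le_add_dualL (hL t (by omega) ht₂) _ _ _ _
  have htelescope : ∑ t ∈ Icc (τ + 1) T,
      (x (t - 1) ⬝ᵥ (p t - p (t - 1)) + (x t - x (t - 1)) ⬝ᵥ p t) = x T ⬝ᵥ p T - x τ ⬝ᵥ p τ := by
    rw [← sum_Icc_sub_pred hτ (fun t => x t ⬝ᵥ p t)]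
    refine sum_congr rfl fun t _ => ?_
    simp only [dotProduct_sub, sub_dotProduct]
    ring
  calc ((x τ ⬝ᵥ -p τ : ℝ) : EReal)
      = ((x T ⬝ᵥ p T - x τ ⬝ᵥ p τ : ℝ) : EReal) + ((x T ⬝ᵥ -p T : ℝ) : EReal) := by
        rw [← EReal.coe_add, dotProduct_neg, dotProduct_neg]; ring_nf
    _ ≤ (∑ t ∈ Icc (τ + 1) T,
          (L t (x (t - 1)) (x t - x (t - 1)) + dualL L t (p t) (p t - p (t - 1)))) +
          (g (x T) + dualF g (p T)) :=
        add_le_add (htelescope ▸ hstages) (coe_le_add_dualF hg _ _)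
    _ = primalCost T L g τ x + dualCost T L g τ p := by
        rw [sum_add_distrib, add_add_add_comm]; rfl

theorem coe_dot_sub_primalVal_le_dualVal (hL : ∀ t, 1 ≤ t → t ≤ T → ProperFn2 (L t))
    (hg : ProperFn g) {τ : ℕ} (hτ : τ ≤ T) (ξ η : Fin n → ℝ) :
    ((ξ ⬝ᵥ η : ℝ) : EReal) - primalVal T L g τ ξ ≤ dualVal T L g τ η :=
  EReal.coe_sub_iInf_le_iInf fun x p => by
    have h := coe_le_primalCost_add_dualCost hL hg hτ x.1 p.1
    rwa [x.2, p.2, neg_neg] at h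

end BolzaDuality

theorem dual_dominates_conjugate_general (n T : ℕ)
    (L : ℕ → (Fin n → ℝ) → (Fin n → ℝ) → EReal) (g : (Fin n → ℝ) → EReal)
    (hL : ∀ t, 1 ≤ t → t ≤ T → ProperFn2 (L t) ∧ ConvexFn2 (L t) ∧ LscFn2 (L t))
    (hg : ProperFn g ∧ ConvexFn g ∧ LowerSemicontinuous g)
    (τ : ℕ) (hτ : τ ≤ T) :
    (∀ η : Fin n → ℝ, eConj (primalVal T L g τ) η ≤ dualVal T L g τ η) ∧
    (∀ ξ : Fin n → ℝ, eConj (dualVal T L g τ) ξ ≤ primalVal T L g τ ξ) := by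
  have hweak := coe_dot_sub_primalVal_le_dualVal (fun t h₁ h₂ => (hL t h₁ h₂).1) hg.1 hτ
  refine ⟨fun η => iSup_le fun ξ => hweak ξ η, fun ξ => iSup_le fun η => ?_⟩
  rw [dotProduct_comm]
  exact EReal.coe_sub_le_comm _ (hweak ξ η)

/-- For every `τ ∈ {0,…,T}`: `ω_τ ≥ ϑ_τ*` and `ϑ_τ ≥ ω_τ*`. -/
theorem dual_dominates_conjugate (n T : ℕ) (hT : 1 ≤ T)
    (L : ℕ → (Fin n → ℝ) → (Fin n → ℝ) → EReal) (g : (Fin n → ℝ) → EReal)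
    (hL : ∀ t, 1 ≤ t → t ≤ T → ProperFn2 (L t) ∧ ConvexFn2 (L t) ∧ LscFn2 (L t))
    (hg : ProperFn g ∧ ConvexFn g ∧ LowerSemicontinuous g)
    (τ : ℕ) (hτ : τ ≤ T) :
    (∀ η : Fin n → ℝ, eConj (primalVal T L g τ) η ≤ dualVal T L g τ η) ∧
    (∀ ξ : Fin n → ℝ, eConj (dualVal T L g τ) ξ ≤ primalVal T L g τ ξ) :=
  dual_dominates_conjugate_general n T L g hL hg τ hτ
end

section
/- Discrete-time characteristic method (sufficiency): let τ ∈ {0,1,…,T−1} and ξ, η ∈ ℝⁿ. If there exists a discrete-time Hamiltonian trajectory {(x_t, p_t)}_{t=τ}^T with (x_τ, p_τ) = (ξ, −η) satisfying the transversality condition −p_T ∈ ∂g(x_T), then η is a subgradient of the primal value function at ξ, i.e. η ∈ ∂ϑ_τ(ξ). -/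
open Matrix Finset

section CharMethodAux

open Matrix Finset

variable {n : ℕ}

private lemma ereal_cases (x : EReal) : x = ⊥ ∨ (∃ r : ℝ, x = (r : EReal)) ∨ x = ⊤ := by
  induction x with
  | bot => exact Or.inl rfl
  | coe r => exact Or.inr (Or.inl ⟨r, rfl⟩)
  | top => exact Or.inr (Or.inr rfl)

private lemma ereal_real {x : EReal} (h1 : x ≠ ⊥) (h2 : x ≠ ⊤) : ∃ r : ℝ, x = (r : EReal) := by
  rcases ereal_cases x with h | h | h
  · exact absurd h h1
  · exact h
  · exact absurd h h2

private lemma ereal_top_of_top_le_sub_coe {b : EReal} {c : ℝ}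
    (h : (⊤ : EReal) ≤ b - (c : EReal)) : b = ⊤ := by
  rcases ereal_cases b with hb | ⟨r, hr⟩ | ht
  · rw [hb, sub_eq_add_neg, EReal.bot_add] at h
    exact absurd h (by simp)
  · rw [hr, ← EReal.coe_sub] at h
    exact absurd (top_le_iff.1 h) (EReal.coe_ne_top _)
  · exact ht

private lemma isClosed_epi (φ : (Fin n → ℝ) → EReal) (h : LowerSemicontinuous φ) :
    IsClosed {q : (Fin n → ℝ) × ℝ | φ q.1 ≤ (q.2 : EReal)} := by
  rw [← isOpen_compl_iff, isOpen_iff_mem_nhds]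
  rintro ⟨u, s⟩ hus
  simp only [Set.mem_compl_iff, Set.mem_setOf_eq, not_le] at hus
  obtain ⟨c, hc1, hc2⟩ := EReal.exists_between_coe_real hus
  have hU : {u' : Fin n → ℝ | (c : EReal) < φ u'} ∈ nhds u := h u c hc2
  refine Filter.mem_of_superset
    (prod_mem_nhds hU (Iio_mem_nhds (EReal.coe_lt_coe_iff.1 hc1))) ?_
  rintro ⟨u', s'⟩ ⟨h1, h2⟩
  simp only [Set.mem_compl_iff, Set.mem_setOf_eq, not_le]
  exact lt_trans (EReal.coe_lt_coe_iff.2 h2) h1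

private lemma sep_point {S : Set ((Fin n → ℝ) × ℝ)} (hconv : Convex ℝ S) (hcl : IsClosed S)
    {v : Fin n → ℝ} {r : ℝ} (hx : (v, r) ∉ S) :
    ∃ (a : Fin n → ℝ) (b u : ℝ),
      (∀ w ∈ S, a ⬝ᵥ w.1 + w.2 * b < u) ∧ u < a ⬝ᵥ v + r * b := by
  obtain ⟨f, u, hfS, hfx⟩ := geometric_hahn_banach_closed_point hconv hcl hx
  set a : Fin n → ℝ := fun i => f ((fun j => if i = j then 1 else 0), 0) with ha
  have key : ∀ (w : Fin n → ℝ) (s : ℝ), f (w, s) = a ⬝ᵥ w + s * f (0, 1) := by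
    intro w s
    have h1 : ((w, s) : (Fin n → ℝ) × ℝ)
        = (w, (0 : ℝ)) + s • ((0 : Fin n → ℝ), (1 : ℝ)) := by
      simp
    rw [h1, map_add, _root_.map_smul, smul_eq_mul]
    congr 1
    have h2 := LinearMap.pi_apply_eq_sum_univ
      ((f : ((Fin n → ℝ) × ℝ) →ₗ[ℝ] ℝ).comp (LinearMap.inl ℝ (Fin n → ℝ) ℝ)) w
    simp only [LinearMap.coe_comp, Function.comp_apply, LinearMap.inl_apply,
      ContinuousLinearMap.coe_coe, smul_eq_mul] at h2
    rw [h2, ha]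
    simp [dotProduct, mul_comm]
  refine ⟨a, f (0, 1), u, fun w hw => ?_, ?_⟩
  · have hk := key w.1 w.2
    rw [Prod.mk.eta] at hk
    have := hfS w hw
    rwa [hk] at this
  · have := key v r
    rwa [this] at hfx

private lemma le_conj (φ : (Fin n → ℝ) → EReal) (w q : Fin n → ℝ) :
    ((w ⬝ᵥ q : ℝ) : EReal) - φ w ≤ eConj φ q :=
  le_iSup (fun x : Fin n → ℝ => ((x ⬝ᵥ q : ℝ) : EReal) - φ x) w

private lemma conj_le {φ : (Fin n → ℝ) → EReal} (hbot : ∀ w, φ w ≠ ⊥)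
    {q : Fin n → ℝ} {c : ℝ}
    (h : ∀ (w : Fin n → ℝ) (s : ℝ), φ w = (s : EReal) → w ⬝ᵥ q - s ≤ c) :
    eConj φ q ≤ (c : EReal) := by
  simp only [eConj]
  refine iSup_le fun w => ?_
  rcases ereal_cases (φ w) with hb | ⟨s, hs⟩ | ht
  · exact absurd hb (hbot w)
  · rw [hs, ← EReal.coe_sub]
    exact EReal.coe_le_coe_iff.2 (h w s hs)
  · rw [ht, EReal.sub_top]
    exact bot_le

private lemma conj_le_of_sep {φ : (Fin n → ℝ) → EReal} (hbot : ∀ w, φ w ≠ ⊥)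
    {a : Fin n → ℝ} {b u : ℝ} (hb : b < 0)
    (hS : ∀ (w : Fin n → ℝ) (s : ℝ), φ w ≤ (s : EReal) → a ⬝ᵥ w + s * b < u) :
    eConj φ ((-b)⁻¹ • a) ≤ (((-b)⁻¹ * u : ℝ) : EReal) := by
  apply conj_le hbot
  intro w s hws
  have h1 : a ⬝ᵥ w + s * b < u := hS w s (le_of_eq hws)
  have hb' : (0:ℝ) < -b := neg_pos.2 hb
  have h2 : w ⬝ᵥ ((-b)⁻¹ • a) = (-b)⁻¹ * (a ⬝ᵥ w) := by
    rw [dotProduct_smul, smul_eq_mul, dotProduct_comm]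
  rw [h2]
  have h3 := mul_lt_mul_of_pos_left h1 (inv_pos.2 hb')
  have h4 : (-b)⁻¹ * (a ⬝ᵥ w + s * b) = (-b)⁻¹ * (a ⬝ᵥ w) - s := by
    linear_combination (-s) * mul_inv_cancel₀ (ne_of_gt hb')
  rw [h4] at h3
  linarith

private lemma conj_proper {φ : (Fin n → ℝ) → EReal} (hconv : ConvexFn φ)
    (hlsc : LowerSemicontinuous φ) (hbot : ∀ w, φ w ≠ ⊥)
    {v₀ : Fin n → ℝ} {r₀ : ℝ} (h0 : φ v₀ = (r₀ : EReal)) :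
    ∃ (q : Fin n → ℝ) (c : ℝ), eConj φ q ≤ (c : EReal) := by
  have hx : ((v₀, r₀ - 1) : (Fin n → ℝ) × ℝ)
      ∉ {q : (Fin n → ℝ) × ℝ | φ q.1 ≤ (q.2 : EReal)} := by
    simp only [Set.mem_setOf_eq, h0, not_le]
    exact EReal.coe_lt_coe_iff.2 (by linarith)
  obtain ⟨a, b, u, hS, hpt⟩ := sep_point hconv (isClosed_epi φ hlsc) hx
  have hmem : a ⬝ᵥ v₀ + r₀ * b < u := hS (v₀, r₀) (by simp [h0])
  have hb : b < 0 := by nlinarith [hpt, hmem]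
  exact ⟨_, _, conj_le_of_sep hbot hb (fun w s hws => hS (w, s) hws)⟩

private lemma biconj_lt {φ : (Fin n → ℝ) → EReal} (hconv : ConvexFn φ)
    (hlsc : LowerSemicontinuous φ) (hbot : ∀ w, φ w ≠ ⊥)
    {v₀ : Fin n → ℝ} {r₀ : ℝ} (h0 : φ v₀ = (r₀ : EReal))
    {v : Fin n → ℝ} {r : ℝ} (hr : (r : EReal) < φ v) :
    ∃ (q : Fin n → ℝ) (c : ℝ), eConj φ q ≤ (c : EReal) ∧ r < v ⬝ᵥ q - c := by
  have hx : ((v, r) : (Fin n → ℝ) × ℝ)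
      ∉ {q : (Fin n → ℝ) × ℝ | φ q.1 ≤ (q.2 : EReal)} := by
    simp only [Set.mem_setOf_eq, not_le]
    exact hr
  obtain ⟨a, b, u, hS, hpt⟩ := sep_point hconv (isClosed_epi φ hlsc) hx
  have hb : b ≤ 0 := by
    by_contra hbc
    push_neg at hbc
    have hm0 : (0:ℝ) ≤ max 0 ((u - a ⬝ᵥ v₀ - r₀ * b) / b) := le_max_left _ _
    have h1 : a ⬝ᵥ v₀ + (r₀ + max 0 ((u - a ⬝ᵥ v₀ - r₀ * b) / b)) * b < u := by
      refine hS (v₀, r₀ + max 0 ((u - a ⬝ᵥ v₀ - r₀ * b) / b)) ?_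
      simp only [Set.mem_setOf_eq, h0]
      exact EReal.coe_le_coe_iff.2 (by linarith)
    have h2 : (u - a ⬝ᵥ v₀ - r₀ * b) / b ≤ max 0 ((u - a ⬝ᵥ v₀ - r₀ * b) / b) :=
      le_max_right _ _
    rw [div_le_iff₀ hbc] at h2
    nlinarith [h1, h2]
  rcases lt_or_eq_of_le hb with hblt | hbeq
  · refine ⟨(-b)⁻¹ • a, (-b)⁻¹ * u,
      conj_le_of_sep hbot hblt (fun w s hws => hS (w, s) hws), ?_⟩
    have hb' : (0:ℝ) < -b := neg_pos.2 hblt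
    have h2 : v ⬝ᵥ ((-b)⁻¹ • a) = (-b)⁻¹ * (a ⬝ᵥ v) := by
      rw [dotProduct_smul, smul_eq_mul, dotProduct_comm]
    rw [h2]
    have h3 := mul_lt_mul_of_pos_left hpt (inv_pos.2 hb')
    have h4 : (-b)⁻¹ * (a ⬝ᵥ v + r * b) = (-b)⁻¹ * (a ⬝ᵥ v) - r := by
      linear_combination (-r) * mul_inv_cancel₀ (ne_of_gt hb')
    rw [h4] at h3
    linarith
  · obtain ⟨q₀, c₀, hq₀⟩ := conj_proper hconv hlsc hbot h0
    have hSu : ∀ (w : Fin n → ℝ) (s : ℝ), φ w = (s : EReal) → a ⬝ᵥ w < u := by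
      intro w s hws
      have := hS (w, s) (le_of_eq hws)
      rw [hbeq] at this
      simpa using this
    have hd : (0:ℝ) < a ⬝ᵥ v - u := by
      have := hpt
      rw [hbeq] at this
      simp only [mul_zero, add_zero] at this
      linarith
    have hlam0 : (0:ℝ) ≤ max 0 ((r + c₀ - v ⬝ᵥ q₀ + 1) / (a ⬝ᵥ v - u)) := le_max_left _ _
    have hlamd : r + c₀ - v ⬝ᵥ q₀ + 1
        ≤ max 0 ((r + c₀ - v ⬝ᵥ q₀ + 1) / (a ⬝ᵥ v - u)) * (a ⬝ᵥ v - u) := by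
      have h2 := le_max_right 0 ((r + c₀ - v ⬝ᵥ q₀ + 1) / (a ⬝ᵥ v - u))
      rw [div_le_iff₀ hd] at h2
      linarith
    set lam : ℝ := max 0 ((r + c₀ - v ⬝ᵥ q₀ + 1) / (a ⬝ᵥ v - u)) with hlam
    refine ⟨q₀ + lam • a, c₀ + lam * u, ?_, ?_⟩
    · apply conj_le hbot
      intro w s hws
      have hA : w ⬝ᵥ q₀ - s ≤ c₀ := by
        have h5 : ((w ⬝ᵥ q₀ : ℝ) : EReal) - φ w ≤ eConj φ q₀ := le_conj φ w q₀
        rw [hws, ← EReal.coe_sub] at h5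
        exact EReal.coe_le_coe_iff.1 (le_trans h5 hq₀)
      have hB : a ⬝ᵥ w < u := hSu w s hws
      have hC : w ⬝ᵥ (q₀ + lam • a) = w ⬝ᵥ q₀ + lam * (a ⬝ᵥ w) := by
        rw [dotProduct_add, dotProduct_smul, smul_eq_mul, dotProduct_comm w a]
      rw [hC]
      nlinarith [mul_le_mul_of_nonneg_left (le_of_lt hB) hlam0]
    · have hC : v ⬝ᵥ (q₀ + lam • a) = v ⬝ᵥ q₀ + lam * (a ⬝ᵥ v) := by
        rw [dotProduct_add, dotProduct_smul, smul_eq_mul, dotProduct_comm v a]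
      rw [hC]
      nlinarith [hlamd]

private lemma ham_eq_conj (L : ℕ → (Fin n → ℝ) → (Fin n → ℝ) → EReal) (t : ℕ)
    (x q : Fin n → ℝ) : Ham L t x q = eConj (fun v => L t x v) q := by
  simp only [Ham, eConj]
  exact iSup_congr fun v => by rw [dotProduct_comm]

private lemma lag_top_of_ham_bot {φ : (Fin n → ℝ) → EReal} {P : Fin n → ℝ}
    (h : (⨆ v : Fin n → ℝ, ((P ⬝ᵥ v : ℝ) : EReal) - φ v) = ⊥) (v : Fin n → ℝ) :
    φ v = ⊤ := by
  have h2 : ((P ⬝ᵥ v : ℝ) : EReal) - φ v ≤ ⊥ :=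
    h ▸ le_iSup (fun v : Fin n → ℝ => ((P ⬝ᵥ v : ℝ) : EReal) - φ v) v
  rcases ereal_cases (φ v) with hb | ⟨s, hs⟩ | ht
  · rw [hb, EReal.coe_sub_bot] at h2
    exact absurd h2 (by simp)
  · rw [hs, ← EReal.coe_sub] at h2
    exact absurd (le_bot_iff.1 h2) (EReal.coe_ne_bot _)
  · exact ht

private lemma ham_bot_of_all_top {φ : (Fin n → ℝ) → EReal} {P : Fin n → ℝ}
    (h : ∀ v, φ v = ⊤) :
    (⨆ v : Fin n → ℝ, ((P ⬝ᵥ v : ℝ) : EReal) - φ v) = ⊥ := by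
  simp [h, EReal.sub_top]

private lemma conj_not_all_top {φ : (Fin n → ℝ) → EReal} (hconv : ConvexFn φ)
    (hlsc : LowerSemicontinuous φ) (hbot : ∀ w, φ w ≠ ⊥)
    (hne : ∃ v, φ v ≠ ⊤) (htop : ∀ q : Fin n → ℝ, eConj φ q = ⊤) : False := by
  obtain ⟨v₀, hv₀⟩ := hne
  obtain ⟨r₀, h0⟩ := ereal_real (hbot v₀) hv₀
  obtain ⟨q, c, hq⟩ := conj_proper hconv hlsc hbot h0
  rw [htop q] at hq
  exact absurd (top_le_iff.1 hq) (EReal.coe_ne_top _)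

private lemma slice_convex {L2 : (Fin n → ℝ) → (Fin n → ℝ) → EReal}
    (hc : ConvexFn2 L2) (x₀ : Fin n → ℝ) : ConvexFn (fun v => L2 x₀ v) := by
  intro q1 hq1 q2 hq2 aa bb haa hbb hab
  have h1 : (((x₀, q1.1), q1.2) : ((Fin n → ℝ) × (Fin n → ℝ)) × ℝ)
      ∈ {q : ((Fin n → ℝ) × (Fin n → ℝ)) × ℝ | L2 q.1.1 q.1.2 ≤ (q.2 : EReal)} := hq1
  have h2 : (((x₀, q2.1), q2.2) : ((Fin n → ℝ) × (Fin n → ℝ)) × ℝ)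
      ∈ {q : ((Fin n → ℝ) × (Fin n → ℝ)) × ℝ | L2 q.1.1 q.1.2 ≤ (q.2 : EReal)} := hq2
  have h3 := hc h1 h2 haa hbb hab
  simp only [Prod.smul_mk, Prod.mk_add_mk, smul_eq_mul, Set.mem_setOf_eq] at h3
  simp only [Set.mem_setOf_eq, Prod.fst_add, Prod.snd_add, Prod.smul_fst, Prod.smul_snd,
    smul_eq_mul]
  rwa [Convex.combo_self hab] at h3

private lemma slice_lsc {L2 : (Fin n → ℝ) → (Fin n → ℝ) → EReal}
    (hl : LowerSemicontinuous (fun q : (Fin n → ℝ) × (Fin n → ℝ) => L2 q.1 q.2))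
    (x₀ : Fin n → ℝ) : LowerSemicontinuous (fun v => L2 x₀ v) :=
  LowerSemicontinuous.comp (f := fun q : (Fin n → ℝ) × (Fin n → ℝ) => L2 q.1 q.2)
    (g := fun v => (x₀, v)) hl (Continuous.prodMk continuous_const continuous_id)

private lemma step_ineq {L : ℕ → (Fin n → ℝ) → (Fin n → ℝ) → EReal} {t : ℕ}
    (hprop : ProperFn2 (L t)) (hconv : ConvexFn2 (L t)) (hlsc : LscFn2 (L t))
    {X V Y W P DP : Fin n → ℝ}
    (h1 : Ham L t Y P + ((DP ⬝ᵥ (Y - X) : ℝ) : EReal) ≤ Ham L t X P)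
    (h2 : ∀ q, Ham L t X P ≤ Ham L t X q - ((V ⬝ᵥ (q - P) : ℝ) : EReal)) :
    L t X V + ((P ⬝ᵥ W - P ⬝ᵥ V + DP ⬝ᵥ (Y - X) : ℝ) : EReal) ≤ L t Y W := by
  have hbotX : ∀ v, L t X v ≠ ⊥ := fun v => hprop.2 X v
  have hbotY : ∀ v, L t Y v ≠ ⊥ := fun v => hprop.2 Y v
  have hconvX : ConvexFn (fun v => L t X v) := slice_convex hconv X
  have hlscX : LowerSemicontinuous (fun v => L t X v) := slice_lsc hlsc X
  have hXne : Ham L t X P ≠ ⊤ := by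
    intro hXt
    refine conj_not_all_top hconvX hlscX hbotX ?_ ?_
    · by_contra hall
      push_neg at hall
      have hbo : Ham L t X P = ⊥ := by
        simp only [Ham]
        exact ham_bot_of_all_top hall
      rw [hbo] at hXt
      exact absurd hXt (by simp)
    · intro q
      have h2q := h2 q
      rw [hXt] at h2q
      have h3 := ereal_top_of_top_le_sub_coe h2q
      rwa [ham_eq_conj] at h3
  rcases ereal_cases (Ham L t Y P) with hYb | ⟨m, hm⟩ | hYt
  · have hYtop : L t Y W = ⊤ := by
      refine lag_top_of_ham_bot (P := P) ?_ W
      simpa only [Ham] using hYb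
    rw [hYtop]
    exact le_top
  · have hXb : Ham L t X P ≠ ⊥ := by
      intro hXb
      rw [hXb, hm] at h1
      rw [← EReal.coe_add] at h1
      exact absurd (le_bot_iff.1 h1) (EReal.coe_ne_bot _)
    obtain ⟨h, hh⟩ := ereal_real hXb hXne
    rw [hm, hh, ← EReal.coe_add] at h1
    have hh1 : m + DP ⬝ᵥ (Y - X) ≤ h := EReal.coe_le_coe_iff.1 h1
    have key : L t X V ≤ ((P ⬝ᵥ V - h : ℝ) : EReal) := by
      by_contra hk
      push_neg at hk
      have hne : ∃ v, L t X v ≠ ⊤ := by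
        by_contra hall
        push_neg at hall
        have hb2 : Ham L t X P = ⊥ := by
          simp only [Ham]
          exact ham_bot_of_all_top hall
        exact hXb hb2
      obtain ⟨v₀, hv₀⟩ := hne
      obtain ⟨r₀, h0⟩ := ereal_real (hbotX v₀) hv₀
      obtain ⟨q, c, hqc, hlt⟩ := biconj_lt hconvX hlscX hbotX h0 hk
      have h2q := h2 q
      rw [hh, ham_eq_conj] at h2q
      have h5 : (h : EReal) ≤ (c : EReal) - ((V ⬝ᵥ (q - P) : ℝ) : EReal) :=
        le_trans h2q (EReal.sub_le_sub hqc le_rfl)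
      rw [← EReal.coe_sub] at h5
      have h6 : h ≤ c - V ⬝ᵥ (q - P) := EReal.coe_le_coe_iff.1 h5
      rw [dotProduct_sub, dotProduct_comm V P] at h6
      have e3 : V ⬝ᵥ q = v₀ ⬝ᵥ q ∨ True := Or.inr trivial
      linarith [h6, hlt]
    rcases ereal_cases (L t X V) with hLb | ⟨l, hl⟩ | hLt
    · exact absurd hLb (hbotX V)
    · have hlle : l ≤ P ⬝ᵥ V - h := by
        rw [hl] at key
        exact EReal.coe_le_coe_iff.1 key
      rcases ereal_cases (L t Y W) with hYWb | ⟨s, hs⟩ | hYWt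
      · exact absurd hYWb (hbotY W)
      · have h7 : ((P ⬝ᵥ W : ℝ) : EReal) - L t Y W ≤ Ham L t Y P := by
          simp only [Ham]
          exact le_iSup (fun v : Fin n → ℝ => ((P ⬝ᵥ v : ℝ) : EReal) - L t Y v) W
        rw [hs, hm, ← EReal.coe_sub] at h7
        have h8 : P ⬝ᵥ W - s ≤ m := EReal.coe_le_coe_iff.1 h7
        rw [hl, hs, ← EReal.coe_add]
        exact EReal.coe_le_coe_iff.2 (by linarith)
      · rw [hYWt]
        exact le_top
    · rw [hLt] at key
      exact absurd (top_le_iff.1 key) (EReal.coe_ne_top _)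
  · rw [hYt, EReal.top_add_coe] at h1
    exact absurd (top_le_iff.1 h1) hXne

private lemma ereal_coe_sum (s : Finset ℕ) (f : ℕ → ℝ) :
    ((∑ t ∈ s, f t : ℝ) : EReal) = ∑ t ∈ s, ((f t : ℝ) : EReal) :=
  map_sum (⟨⟨Real.toEReal, EReal.coe_zero⟩, EReal.coe_add⟩ : ℝ →+ EReal) f s

private lemma telescope (F : ℕ → ℝ) (τ : ℕ) :
    ∀ N, τ ≤ N → ∑ t ∈ Finset.Icc (τ + 1) N, (F t - F (t - 1)) = F N - F τ := by
  intro N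
  induction N with
  | zero =>
    intro h
    have hτ0 : τ = 0 := Nat.le_zero.1 h
    subst hτ0
    rw [Finset.Icc_eq_empty (by omega)]
    simp
  | succ N ih =>
    intro h
    rcases Nat.lt_or_ge τ (N + 1) with h1 | h2
    · have hτN : τ ≤ N := by omega
      rw [Finset.sum_Icc_succ_top (by omega : τ + 1 ≤ N + 1), ih hτN]
      have : N + 1 - 1 = N := by omega
      rw [this]
      ring
    · have hτ : τ = N + 1 := by omega
      subst hτ
      rw [Finset.Icc_eq_empty (by omega)]
      simp

end CharMethodAux

/-- **Characteristic method, sufficiency.** If there is a discrete-time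
Hamiltonian trajectory `{(x_t,p_t)}` on `[τ,T]` with `(x_τ,p_τ) = (ξ,−η)` satisfying the
transversality condition `−p_T ∈ ∂g(x_T)`, then `η ∈ ∂ϑ_τ(ξ)`. -/
theorem characteristic_method_sufficiency (n T : ℕ) (hT : 1 ≤ T)
    (L : ℕ → (Fin n → ℝ) → (Fin n → ℝ) → EReal) (g : (Fin n → ℝ) → EReal)
    (hL : ∀ t, 1 ≤ t → t ≤ T → ProperFn2 (L t) ∧ ConvexFn2 (L t) ∧ LscFn2 (L t))
    (hg : ProperFn g ∧ ConvexFn g ∧ LowerSemicontinuous g)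
    (τ : ℕ) (hτ : τ + 1 ≤ T) (ξ η : Fin n → ℝ)
    (x p : ℕ → Fin n → ℝ)
    (hxp : IsHamTraj T L τ x p)
    (hinit : x τ = ξ ∧ p τ = -η)
    (htrans : -p T ∈ subdiff g (x T)) :
    η ∈ subdiff (primalVal T L g τ) ξ := by
  obtain ⟨hx0, hp0⟩ := hinit
  simp only [subdiff, Set.mem_setOf_eq]
  intro z
  simp only [primalVal]
  refine le_iInf fun y' => ?_
  obtain ⟨y, hy⟩ := y'
  have htrans' : ∀ z', g (x T) + (((-p T) ⬝ᵥ (z' - x T) : ℝ) : EReal) ≤ g z' := htrans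
  -- per-step estimate
  have hstep : ∀ t ∈ Finset.Icc (τ + 1) T,
      L t (x (t - 1)) (x t - x (t - 1)) +
        ((p t ⬝ᵥ (y t - y (t - 1)) - p t ⬝ᵥ (x t - x (t - 1))
          + (p t - p (t - 1)) ⬝ᵥ (y (t - 1) - x (t - 1)) : ℝ) : EReal)
        ≤ L t (y (t - 1)) (y t - y (t - 1)) := by
    intro t ht
    rw [Finset.mem_Icc] at ht
    obtain ⟨hL1, hL2, hL3⟩ := hL t (by omega) ht.2
    obtain ⟨c1, c2⟩ := hxp t ht.1 ht.2
    exact step_ineq hL1 hL2 hL3 (c1 (y (t - 1))) c2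
  have hsum : ∑ t ∈ Finset.Icc (τ + 1) T,
      (L t (x (t - 1)) (x t - x (t - 1)) +
        ((p t ⬝ᵥ (y t - y (t - 1)) - p t ⬝ᵥ (x t - x (t - 1))
          + (p t - p (t - 1)) ⬝ᵥ (y (t - 1) - x (t - 1)) : ℝ) : EReal))
      ≤ ∑ t ∈ Finset.Icc (τ + 1) T, L t (y (t - 1)) (y t - y (t - 1)) :=
    Finset.sum_le_sum hstep
  -- telescoping identity
  have htel : ∑ t ∈ Finset.Icc (τ + 1) T,
      (p t ⬝ᵥ (y t - y (t - 1)) - p t ⬝ᵥ (x t - x (t - 1))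
        + (p t - p (t - 1)) ⬝ᵥ (y (t - 1) - x (t - 1)))
      = p T ⬝ᵥ (y T - x T) - p τ ⬝ᵥ (y τ - x τ) := by
    have hsrw : ∀ t : ℕ,
        p t ⬝ᵥ (y t - y (t - 1)) - p t ⬝ᵥ (x t - x (t - 1))
          + (p t - p (t - 1)) ⬝ᵥ (y (t - 1) - x (t - 1))
        = (fun u => p u ⬝ᵥ (y u - x u)) t - (fun u => p u ⬝ᵥ (y u - x u)) (t - 1) := by
      intro t
      simp only [dotProduct_sub, sub_dotProduct]
      ring
    rw [Finset.sum_congr rfl (fun t _ => hsrw t),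
      telescope (fun u => p u ⬝ᵥ (y u - x u)) τ T (by omega)]
  have hceq : η ⬝ᵥ (z - ξ)
      = (∑ t ∈ Finset.Icc (τ + 1) T,
          (p t ⬝ᵥ (y t - y (t - 1)) - p t ⬝ᵥ (x t - x (t - 1))
            + (p t - p (t - 1)) ⬝ᵥ (y (t - 1) - x (t - 1))))
        + (-p T) ⬝ᵥ (y T - x T) := by
    rw [htel, neg_dotProduct, hy, hx0, hp0, neg_dotProduct]
    ring
  -- assemble
  have hbase : (⨅ x' : {x' : ℕ → Fin n → ℝ // x' τ = ξ},
        (∑ t ∈ Finset.Icc (τ + 1) T, L t (x'.1 (t - 1)) (x'.1 t - x'.1 (t - 1))) + g (x'.1 T))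
      ≤ (∑ t ∈ Finset.Icc (τ + 1) T, L t (x (t - 1)) (x t - x (t - 1))) + g (x T) :=
    iInf_le _ (⟨x, hx0⟩ : {x' : ℕ → Fin n → ℝ // x' τ = ξ})
  refine le_trans (add_le_add_left hbase _) ?_
  have hcoe : ((η ⬝ᵥ (z - ξ) : ℝ) : EReal)
      = ((∑ t ∈ Finset.Icc (τ + 1) T,
          (p t ⬝ᵥ (y t - y (t - 1)) - p t ⬝ᵥ (x t - x (t - 1))
            + (p t - p (t - 1)) ⬝ᵥ (y (t - 1) - x (t - 1))) : ℝ) : EReal)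
        + (((-p T) ⬝ᵥ (y T - x T) : ℝ) : EReal) := by
    rw [← EReal.coe_add, hceq]
  rw [hcoe, add_add_add_comm]
  refine add_le_add ?_ (htrans' (y T))
  rw [ereal_coe_sum, ← Finset.sum_add_distrib]
  exact hsum
end

section
/- Duality symmetry (the dual of the dual is the primal): let L : ℝⁿ×ℝⁿ → ℝ∪{+∞} be proper, convex and lower semicontinuous, and set K(p,w) := sup_{x,v∈ℝⁿ} { x·w + v·p − L(x,v) } and L̃(p,w) := K(p+w, w). Then the conjugate of L̃ satisfies L̃*(v,x) = L(x−v, v) for all v, x ∈ ℝⁿ. -/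
open Matrix

noncomputable section

/-- Legendre–Fenchel conjugate of a function of two vector variables:
`φ*(y₁,y₂) = sup_{x₁,x₂} { x₁·y₁ + x₂·y₂ − φ(x₁,x₂) }`. -/
def eConj2 {n : ℕ} (φ : (Fin n → ℝ) → (Fin n → ℝ) → EReal)
    (y₁ y₂ : Fin n → ℝ) : EReal :=
  ⨆ x₁ : Fin n → ℝ, ⨆ x₂ : Fin n → ℝ, ((x₁ ⬝ᵥ y₁ + x₂ ⬝ᵥ y₂ : ℝ) : EReal) - φ x₁ x₂

/-- The dual Lagrangian `K(p,w) = sup_{x,v} { x·w + v·p − L(x,v) }`. -/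
def dualLag {n : ℕ} (L : (Fin n → ℝ) → (Fin n → ℝ) → EReal) (p w : Fin n → ℝ) : EReal :=
  ⨆ x : Fin n → ℝ, ⨆ v : Fin n → ℝ, ((x ⬝ᵥ w + v ⬝ᵥ p : ℝ) : EReal) - L x v

section FenchelMoreau

variable {n : ℕ}

/-- Representation of a continuous linear functional on `((Fin n → ℝ) × (Fin n → ℝ)) × ℝ`. -/
lemma clm_repr (ℓ : (((Fin n → ℝ) × (Fin n → ℝ)) × ℝ) →L[ℝ] ℝ) :
    ∃ (y₁ y₂ : Fin n → ℝ) (μ : ℝ), ∀ x₁ x₂ (s : ℝ),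
      ℓ ((x₁, x₂), s) = x₁ ⬝ᵥ y₁ + x₂ ⬝ᵥ y₂ + μ * s := by
  classical
  set g₁ : (Fin n → ℝ) →ₗ[ℝ] ℝ :=
    ℓ.toLinearMap ∘ₗ (LinearMap.inl ℝ ((Fin n → ℝ) × (Fin n → ℝ)) ℝ) ∘ₗ
      (LinearMap.inl ℝ (Fin n → ℝ) (Fin n → ℝ)) with hg₁
  set g₂ : (Fin n → ℝ) →ₗ[ℝ] ℝ :=
    ℓ.toLinearMap ∘ₗ (LinearMap.inl ℝ ((Fin n → ℝ) × (Fin n → ℝ)) ℝ) ∘ₗ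
      (LinearMap.inr ℝ (Fin n → ℝ) (Fin n → ℝ)) with hg₂
  refine ⟨fun i => g₁ (fun j => if i = j then 1 else 0),
          fun i => g₂ (fun j => if i = j then 1 else 0), ℓ ((0, 0), 1), ?_⟩
  intro x₁ x₂ s
  have hsplit : ((x₁, x₂), s) = (((x₁, 0), 0) + ((0, x₂), 0)) + s • ((0, 0), 1) := by
    simp [Prod.ext_iff]
  rw [hsplit, map_add, map_add, ℓ.map_smul]
  have h1 : ℓ ((x₁, 0), 0) = x₁ ⬝ᵥ fun i => g₁ fun j => if i = j then 1 else 0 := by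
    have := g₁.pi_apply_eq_sum_univ x₁
    exact (show ℓ ((x₁, 0), 0) = g₁ x₁ from rfl).trans (by simpa [dotProduct, smul_eq_mul, mul_comm] using this)
  have h2 : ℓ ((0, x₂), 0) = x₂ ⬝ᵥ fun i => g₂ fun j => if i = j then 1 else 0 := by
    have := g₂.pi_apply_eq_sum_univ x₂
    exact (show ℓ ((0, x₂), 0) = g₂ x₂ from rfl).trans (by simpa [dotProduct, smul_eq_mul, mul_comm] using this)
  simp only [smul_eq_mul] at *
  rw [h1, h2]
  ring_nf

lemma ereal_sub_sub_cancel (c : ℝ) (Λ : EReal) : (c : EReal) - ((c : EReal) - Λ) ≤ Λ := by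
  induction Λ using EReal.rec with
  | bot => simp [EReal.coe_sub_bot, EReal.sub_top]
  | coe t => rw [← EReal.coe_sub, ← EReal.coe_sub]; simp
  | top => exact le_top

/-- Fenchel–Young: each term of the biconjugate supremum is `≤ L a b`. -/
lemma young {L : (Fin n → ℝ) → (Fin n → ℝ) → EReal} (a b w q : Fin n → ℝ) :
    ((w ⬝ᵥ a + q ⬝ᵥ b : ℝ) : EReal) - eConj2 L w q ≤ L a b := by
  have h : ((a ⬝ᵥ w + b ⬝ᵥ q : ℝ) : EReal) - L a b ≤ eConj2 L w q :=
    le_trans (le_iSup (fun x₂ => ((a ⬝ᵥ w + x₂ ⬝ᵥ q : ℝ) : EReal) - L a x₂) b)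
      (le_iSup (fun x₁ => ⨆ x₂, ((x₁ ⬝ᵥ w + x₂ ⬝ᵥ q : ℝ) : EReal) - L x₁ x₂) a)
  have hc : (w ⬝ᵥ a + q ⬝ᵥ b : ℝ) = (a ⬝ᵥ w + b ⬝ᵥ q : ℝ) := by
    rw [dotProduct_comm, dotProduct_comm q b]
  rw [hc]
  calc ((a ⬝ᵥ w + b ⬝ᵥ q : ℝ) : EReal) - eConj2 L w q
      ≤ ((a ⬝ᵥ w + b ⬝ᵥ q : ℝ) : EReal) - (((a ⬝ᵥ w + b ⬝ᵥ q : ℝ) : EReal) - L a b) :=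
        EReal.sub_le_sub le_rfl h
    _ ≤ L a b := ereal_sub_sub_cancel _ _

lemma econj_le_of_bound {L : (Fin n → ℝ) → (Fin n → ℝ) → EReal}
    (hLb : ∀ x v, L x v ≠ ⊥) {c₁ c₂ : Fin n → ℝ} {β : ℝ}
    (h : ∀ x v (s : ℝ), L x v = (s : EReal) → x ⬝ᵥ c₁ + v ⬝ᵥ c₂ - s ≤ β) :
    eConj2 L c₁ c₂ ≤ (β : EReal) := by
  refine iSup_le fun x => iSup_le fun v => ?_
  rcases eq_or_ne (L x v) ⊤ with htop | hne
  · simp [htop, EReal.sub_top]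
  · obtain ⟨s, hs⟩ : ∃ s : ℝ, L x v = (s : EReal) :=
      ⟨(L x v).toReal, (EReal.coe_toReal hne (hLb x v)).symm⟩
    rw [hs, ← EReal.coe_sub]
    exact_mod_cast h x v s hs

lemma le_biconj {L : (Fin n → ℝ) → (Fin n → ℝ) → EReal} {a b c₁ c₂ : Fin n → ℝ} {β : ℝ}
    (h : eConj2 L c₁ c₂ ≤ (β : EReal)) :
    ((c₁ ⬝ᵥ a + c₂ ⬝ᵥ b - β : ℝ) : EReal) ≤ eConj2 (eConj2 L) a b := by
  calc ((c₁ ⬝ᵥ a + c₂ ⬝ᵥ b - β : ℝ) : EReal)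
      = ((c₁ ⬝ᵥ a + c₂ ⬝ᵥ b : ℝ) : EReal) - (β : EReal) := by rw [← EReal.coe_sub]
    _ ≤ ((c₁ ⬝ᵥ a + c₂ ⬝ᵥ b : ℝ) : EReal) - eConj2 L c₁ c₂ := EReal.sub_le_sub le_rfl h
    _ ≤ _ := le_trans (le_iSup (fun x₂ => ((c₁ ⬝ᵥ a + x₂ ⬝ᵥ b : ℝ) : EReal) - eConj2 L c₁ x₂) c₂)
          (le_iSup (fun x₁ => ⨆ x₂, ((x₁ ⬝ᵥ a + x₂ ⬝ᵥ b : ℝ) : EReal) - eConj2 L x₁ x₂) c₁)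

/-- If a separating functional is strictly positive on the epigraph, its vertical slope is `≥ 0`. -/
lemma slope_nonneg {L : (Fin n → ℝ) → (Fin n → ℝ) → EReal} {p₁ p₂ : Fin n → ℝ} {s₀ : ℝ}
    (hs₀ : L p₁ p₂ = (s₀ : EReal)) {y₁ y₂ : Fin n → ℝ} {μ u : ℝ}
    (hsep : ∀ x v (s : ℝ), L x v ≤ (s : EReal) → u < x ⬝ᵥ y₁ + v ⬝ᵥ y₂ + μ * s) :
    0 ≤ μ := by
  by_contra hneg
  push_neg at hneg
  set A := p₁ ⬝ᵥ y₁ + p₂ ⬝ᵥ y₂ with hA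
  have ht : ∀ t : ℝ, 0 ≤ t → u < A + μ * (s₀ + t) := by
    intro t ht
    exact hsep p₁ p₂ (s₀ + t) (by rw [hs₀, EReal.coe_le_coe_iff]; linarith)
  have h0 : u < A + μ * s₀ := by simpa using ht 0 le_rfl
  set t : ℝ := (u - A - μ * s₀) / μ with htdef
  have ht0 : 0 ≤ t :=
    div_nonneg_iff.2 (Or.inr ⟨by linarith, hneg.le⟩)
  have hμt : μ * t = u - A - μ * s₀ := by
    rw [htdef, mul_div_cancel₀ _ (ne_of_lt hneg)]
  have := ht t ht0
  nlinarith

/-- From a strict separation with positive vertical slope, an affine bound on `L`. -/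
lemma bound_of_sep {L : (Fin n → ℝ) → (Fin n → ℝ) → EReal} {y₁ y₂ : Fin n → ℝ} {μ u : ℝ}
    (hμ : 0 < μ)
    (hsep : ∀ x v (s : ℝ), L x v ≤ (s : EReal) → u < x ⬝ᵥ y₁ + v ⬝ᵥ y₂ + μ * s) :
    ∀ x v (s : ℝ), L x v = (s : EReal) →
      x ⬝ᵥ ((-(1/μ)) • y₁) + v ⬝ᵥ ((-(1/μ)) • y₂) - s ≤ -u / μ := by
  intro x v s hs
  have h2 : u < x ⬝ᵥ y₁ + v ⬝ᵥ y₂ + μ * s := hsep x v s (le_of_eq hs)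
  have hd1 : x ⬝ᵥ ((-(1/μ)) • y₁) = (-(1/μ)) * (x ⬝ᵥ y₁) := by
    rw [dotProduct_smul]; simp
  have hd2 : v ⬝ᵥ ((-(1/μ)) • y₂) = (-(1/μ)) * (v ⬝ᵥ y₂) := by
    rw [dotProduct_smul]; simp
  have heq : (-(1/μ)) * (x ⬝ᵥ y₁) + (-(1/μ)) * (v ⬝ᵥ y₂) - s
      = (-(x ⬝ᵥ y₁ + v ⬝ᵥ y₂ + μ * s)) / μ := by
    field_simp
    ring
  rw [hd1, hd2, heq, div_le_div_iff_of_pos_right hμ]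
  linarith

/-- **Fenchel–Moreau**: the biconjugate of a proper convex l.s.c. function is itself. -/
theorem biconj_eq {L : (Fin n → ℝ) → (Fin n → ℝ) → EReal}
    (hP : ProperFn2 L) (hC : ConvexFn2 L) (hS : LscFn2 L) (a b : Fin n → ℝ) :
    eConj2 (eConj2 L) a b = L a b := by
  refine le_antisymm (iSup_le fun w => iSup_le fun q => young a b w q) ?_
  obtain ⟨⟨p₁, p₂, hptop⟩, hbot⟩ := hP
  obtain ⟨s₀, hs₀⟩ : ∃ s : ℝ, L p₁ p₂ = (s : EReal) :=
    ⟨_, (EReal.coe_toReal hptop (hbot _ _)).symm⟩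
  set C : Set (((Fin n → ℝ) × (Fin n → ℝ)) × ℝ) :=
    {q | L q.1.1 q.1.2 ≤ (q.2 : EReal)} with hCdef
  have hCcl : IsClosed C := by
    have h1 : IsClosed {p : ((Fin n → ℝ) × (Fin n → ℝ)) × EReal | L p.1.1 p.1.2 ≤ p.2} :=
      hS.isClosed_epigraph
    have h2 : C = (fun q : ((Fin n → ℝ) × (Fin n → ℝ)) × ℝ => (q.1, (q.2 : EReal))) ⁻¹'
        {p : ((Fin n → ℝ) × (Fin n → ℝ)) × EReal | L p.1.1 p.1.2 ≤ p.2} := rfl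
    rw [h2]
    exact h1.preimage (continuous_fst.prodMk
      (continuous_coe_real_ereal.comp continuous_snd))
  refine le_of_forall_lt_imp_le_of_dense fun z hz => ?_
  obtain ⟨r, hzr, hrL⟩ := EReal.exists_between_coe_real hz
  refine le_trans hzr.le ?_
  -- separate `((a,b),r)` from the epigraph
  have hnot : ((a, b), r) ∉ C := fun hmem => absurd hrL (not_lt.2 hmem)
  obtain ⟨ℓ, u, hu1, hu2⟩ := geometric_hahn_banach_point_closed hC hCcl hnot
  obtain ⟨y₁, y₂, μ, hrep⟩ := clm_repr ℓ
  rw [hrep] at hu1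
  have hsep : ∀ x v (s : ℝ), L x v ≤ (s : EReal) → u < x ⬝ᵥ y₁ + v ⬝ᵥ y₂ + μ * s := by
    intro x v s hxv
    have := hu2 ((x, v), s) hxv
    rwa [hrep] at this
  have hμ0 : 0 ≤ μ := slope_nonneg hs₀ hsep
  rcases hμ0.lt_or_eq with hμ | hμeq
  · -- positive slope: direct affine minorant
    have hb := bound_of_sep hμ hsep
    have h1 := le_biconj (a := a) (b := b) (econj_le_of_bound hbot hb)
    refine le_trans ?_ h1
    rw [EReal.coe_le_coe_iff]
    have hd1 : ((-(1/μ)) • y₁) ⬝ᵥ a = (-(1/μ)) * (a ⬝ᵥ y₁) := by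
      rw [smul_dotProduct, dotProduct_comm]; simp
    have hd2 : ((-(1/μ)) • y₂) ⬝ᵥ b = (-(1/μ)) * (b ⬝ᵥ y₂) := by
      rw [smul_dotProduct, dotProduct_comm]; simp
    rw [hd1, hd2]
    rw [show (-(1/μ)) * (a ⬝ᵥ y₁) + (-(1/μ)) * (b ⬝ᵥ y₂) - -u/μ
        = (u - (a ⬝ᵥ y₁ + b ⬝ᵥ y₂)) / μ by field_simp; ring]
    rw [le_div_iff₀ hμ]
    nlinarith
  · -- zero slope: need an auxiliary affine minorant from a second separation
    have hμ : μ = 0 := hμeq.symm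
    subst hμ
    simp only [zero_mul, add_zero] at hu1 hsep
    -- second separation at a point strictly below the epigraph
    have hnot2 : ((p₁, p₂), s₀ - 1) ∉ C := by
      intro hmem
      rw [hCdef] at hmem
      simp only [Set.mem_setOf_eq, hs₀, EReal.coe_le_coe_iff] at hmem
      linarith
    obtain ⟨ℓ₀, u₀, hv1, hv2⟩ := geometric_hahn_banach_point_closed hC hCcl hnot2
    obtain ⟨z₁, z₂, ν, hrep₀⟩ := clm_repr ℓ₀
    rw [hrep₀] at hv1
    have hsep₀ : ∀ x v (s : ℝ), L x v ≤ (s : EReal) → u₀ < x ⬝ᵥ z₁ + v ⬝ᵥ z₂ + ν * s := by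
      intro x v s hxv
      have := hv2 ((x, v), s) hxv
      rwa [hrep₀] at this
    have hν0 : 0 ≤ ν := slope_nonneg hs₀ hsep₀
    have hν : 0 < ν := by
      rcases hν0.lt_or_eq with h | h
      · exact h
      · exfalso
        have h1 := hsep₀ p₁ p₂ s₀ (le_of_eq hs₀)
        nlinarith
    have hmin := bound_of_sep hν hsep₀
    have hε : 0 < u - (a ⬝ᵥ y₁ + b ⬝ᵥ y₂) := by linarith
    obtain ⟨t, ht0, htε⟩ : ∃ t : ℝ, 0 ≤ t ∧
        r - (((-(1/ν)) • z₁) ⬝ᵥ a + ((-(1/ν)) • z₂) ⬝ᵥ b) + (-u₀/ν)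
          ≤ t * (u - (a ⬝ᵥ y₁ + b ⬝ᵥ y₂)) := by
      refine ⟨max 0 ((r - (((-(1/ν)) • z₁) ⬝ᵥ a + ((-(1/ν)) • z₂) ⬝ᵥ b) + (-u₀/ν)) /
        (u - (a ⬝ᵥ y₁ + b ⬝ᵥ y₂))), le_max_left _ _, ?_⟩
      rw [← div_le_iff₀ hε]
      exact le_max_right _ _
    have hbound : ∀ x v (s : ℝ), L x v = (s : EReal) →
        x ⬝ᵥ ((-(1/ν)) • z₁ - t • y₁) + v ⬝ᵥ ((-(1/ν)) • z₂ - t • y₂) - s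
          ≤ (-u₀/ν) - t * u := by
      intro x v s hs
      have h1 : x ⬝ᵥ ((-(1/ν)) • z₁) + v ⬝ᵥ ((-(1/ν)) • z₂) - s ≤ -u₀/ν := hmin x v s hs
      have h2 : u < x ⬝ᵥ y₁ + v ⬝ᵥ y₂ := hsep x v s (le_of_eq hs)
      have hd1 : x ⬝ᵥ ((-(1/ν)) • z₁ - t • y₁)
          = x ⬝ᵥ ((-(1/ν)) • z₁) - t * (x ⬝ᵥ y₁) := by
        rw [dotProduct_sub, dotProduct_smul]; simp
      have hd2 : v ⬝ᵥ ((-(1/ν)) • z₂ - t • y₂)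
          = v ⬝ᵥ ((-(1/ν)) • z₂) - t * (v ⬝ᵥ y₂) := by
        rw [dotProduct_sub, dotProduct_smul]; simp
      rw [hd1, hd2]
      nlinarith [mul_le_mul_of_nonneg_left h2.le ht0]
    have h1 := le_biconj (a := a) (b := b) (econj_le_of_bound hbot hbound)
    refine le_trans ?_ h1
    rw [EReal.coe_le_coe_iff]
    have hd1 : ((-(1/ν)) • z₁ - t • y₁) ⬝ᵥ a
        = ((-(1/ν)) • z₁) ⬝ᵥ a - t * (a ⬝ᵥ y₁) := by
      simp [sub_dotProduct, smul_dotProduct, smul_eq_mul, dotProduct_comm y₁ a]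
    have hd2 : ((-(1/ν)) • z₂ - t • y₂) ⬝ᵥ b
        = ((-(1/ν)) • z₂) ⬝ᵥ b - t * (b ⬝ᵥ y₂) := by
      simp [sub_dotProduct, smul_dotProduct, smul_eq_mul, dotProduct_comm y₂ b]
    rw [hd1, hd2]
    nlinarith

end FenchelMoreau

/-- **Duality symmetry.** Let `L` be proper, convex and l.s.c.,
`K(p,w) = sup_{x,v}{x·w + v·p − L(x,v)}` and `L̃(p,w) = K(p+w,w)`. Then
`L̃*(v,x) = L(x−v,v)` for all `v,x`. -/
theorem dual_of_dual_is_primal (n : ℕ) (L : (Fin n → ℝ) → (Fin n → ℝ) → EReal)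
    (hL : ProperFn2 L ∧ ConvexFn2 L ∧ LscFn2 L) :
    ∀ v x : Fin n → ℝ,
      eConj2 (fun p w => dualLag L (p + w) w) v x = L (x - v) v := by
  obtain ⟨hP, hC, hS⟩ := hL
  intro v x
  have hdual : ∀ p w, dualLag L (p + w) w = eConj2 L w (p + w) := fun p w => rfl
  have key : eConj2 (fun p w => dualLag L (p + w) w) v x = eConj2 (eConj2 L) (x - v) v := by
    simp only [eConj2, hdual]
    apply le_antisymm
    · refine iSup_le fun p => iSup_le fun w => ?_
      have harith : (p ⬝ᵥ v + w ⬝ᵥ x : ℝ) = (w ⬝ᵥ (x - v) + (p + w) ⬝ᵥ v : ℝ) := by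
        rw [dotProduct_sub, add_dotProduct]; ring
      rw [harith]
      exact le_trans
        (le_iSup (fun x₂ => ((w ⬝ᵥ (x - v) + x₂ ⬝ᵥ v : ℝ) : EReal) - eConj2 L w x₂) (p + w))
        (le_iSup (fun x₁ => ⨆ x₂, ((x₁ ⬝ᵥ (x - v) + x₂ ⬝ᵥ v : ℝ) : EReal) - eConj2 L x₁ x₂) w)
    · refine iSup_le fun c₁ => iSup_le fun c₂ => ?_
      have harith : (c₁ ⬝ᵥ (x - v) + c₂ ⬝ᵥ v : ℝ) = ((c₂ - c₁) ⬝ᵥ v + c₁ ⬝ᵥ x : ℝ) := by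
        rw [dotProduct_sub, sub_dotProduct]; ring
      have hidx : c₂ - c₁ + c₁ = c₂ := sub_add_cancel c₂ c₁
      have hinner : (⨆ x₁, ⨆ x₂, ((x₁ ⬝ᵥ c₁ + x₂ ⬝ᵥ (c₂ - c₁ + c₁) : ℝ) : EReal) - L x₁ x₂)
          = ⨆ x₁, ⨆ x₂, ((x₁ ⬝ᵥ c₁ + x₂ ⬝ᵥ c₂ : ℝ) : EReal) - L x₁ x₂ := by rw [hidx]
      rw [harith, ← hinner]
      exact le_trans
        (le_iSup (fun w => (((c₂ - c₁) ⬝ᵥ v + w ⬝ᵥ x : ℝ) : EReal) - eConj2 L w (c₂ - c₁ + w)) c₁)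
        (le_iSup (fun p => ⨆ w, ((p ⬝ᵥ v + w ⬝ᵥ x : ℝ) : EReal) - eConj2 L w (p + w)) (c₂ - c₁))
  rw [key]
  exact biconj_eq hP hC hS (x - v) v

end
end

section
/- In the discrete-time linear-quadratic problem, under the qualification condition (CQ) that ker(B_t) ∩ ker(R_t) ∩ (𝒰_t)_∞ = {0}, the infimum in the definition of the Lagrangian L(t+1, x, v) = (1/2)‖x‖²_{Q_t} + δ_{𝒳_t}(x) + inf_{u ∈ 𝒰_t} { (1/2)‖u‖²_{R_t} : v = A_t x + B_t u + φ_t } is attained whenever it is finite, and the resulting function L_{t+1} is lower semicontinuous on ℝⁿ×ℝⁿ. -/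
open Matrix

noncomputable section

open scoped Classical in
/-- Indicator function `δ_S` (0 on `S`, `+∞` off `S`) with values in `EReal`. -/
def indE {α : Type*} (S : Set α) (x : α) : EReal := if x ∈ S then 0 else ⊤

/-- Recession cone of a set: `S_∞ = { d : u + s • d ∈ S for all u ∈ S, s ≥ 0 }`. -/
def recCone {E : Type*} [AddCommGroup E] [Module ℝ E] (S : Set E) : Set E :=
  {d | ∀ u ∈ S, ∀ s : ℝ, 0 ≤ s → u + s • d ∈ S}

/-- The linear-quadratic Lagrangian
`L(x,v) = ½‖x‖²_Q + δ_X(x) + inf_{u ∈ U} { ½‖u‖²_R : v = A x + B u + d }`. -/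
def lqL {n m : ℕ} (A : Matrix (Fin n) (Fin n) ℝ) (B : Matrix (Fin n) (Fin m) ℝ)
    (d : Fin n → ℝ) (Q : Matrix (Fin n) (Fin n) ℝ) (R : Matrix (Fin m) (Fin m) ℝ)
    (X : Set (Fin n → ℝ)) (U : Set (Fin m → ℝ)) (x v : Fin n → ℝ) : EReal :=
  (((1 / 2 : ℝ) * (x ⬝ᵥ (Q *ᵥ x)) : ℝ) : EReal) + indE X x +
    ⨅ u : {u : Fin m → ℝ // u ∈ U ∧ v = A *ᵥ x + B *ᵥ u + d},
      (((1 / 2 : ℝ) * (u.1 ⬝ᵥ (R *ᵥ u.1)) : ℝ) : EReal)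

/-! ### Auxiliary lemmas -/

section Aux

open Filter Topology Bornology

variable {n m : ℕ}

lemma contQuad (R : Matrix (Fin m) (Fin m) ℝ) :
    Continuous fun u : Fin m → ℝ => u ⬝ᵥ (R *ᵥ u) := by
  show Continuous fun u : Fin m → ℝ => ∑ i, u i * ∑ j, R i j * u j
  exact continuous_finset_sum _ fun i _ =>
    (continuous_apply i).mul
      (continuous_finset_sum _ fun j _ => continuous_const.mul (continuous_apply j))

lemma contMulVec (B : Matrix (Fin n) (Fin m) ℝ) :
    Continuous fun u : Fin m → ℝ => B *ᵥ u := by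
  have h := B.mulVecLin.continuous_of_finiteDimensional
  simpa [Matrix.coe_mulVecLin] using h

lemma quad_nonneg {R : Matrix (Fin m) (Fin m) ℝ} (hR : R.PosSemidef) (u : Fin m → ℝ) :
    0 ≤ u ⬝ᵥ (R *ᵥ u) := by
  simpa using hR.dotProduct_mulVec_nonneg u

lemma ereal_ne_bot_of_nonneg {x : EReal} (hx : 0 ≤ x) : x ≠ ⊥ :=
  (lt_of_lt_of_le (by simp : (⊥ : EReal) < 0) hx).ne'

/-- A normalized limit of directions going to infinity inside a closed convex set lies in the
recession cone. -/
lemma mem_recCone_of_seq {U : Set (Fin m → ℝ)} (hUc : IsClosed U) (hUx : Convex ℝ U)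
    (u : ℕ → Fin m → ℝ) (hu : ∀ k, u k ∈ U) (t : ℕ → ℝ) (htpos : ∀ k, 0 < t k)
    (ht : Tendsto t atTop atTop) (dv : Fin m → ℝ)
    (hlim : Tendsto (fun k => (t k)⁻¹ • u k) atTop (𝓝 dv)) :
    dv ∈ recCone U := by
  intro u₀ hu₀ s hs
  rcases eq_or_lt_of_le hs with hs0 | hs
  · simpa [← hs0] using hu₀
  have hev : ∀ᶠ k in atTop, (1 - s / t k) • u₀ + (s / t k) • u k ∈ U := by
    filter_upwards [ht.eventually_ge_atTop s] with k hk
    have h1 : 0 ≤ s / t k := div_nonneg hs.le (htpos k).le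
    have h2 : s / t k ≤ 1 := by rw [div_le_one (htpos k)]; exact hk
    exact hUx hu₀ (hu k) (by linarith) h1 (by ring)
  have h0 : Tendsto (fun k => s / t k) atTop (𝓝 0) := by
    simpa [div_eq_mul_inv] using ht.inv_tendsto_atTop.const_mul s
  have hlim2 : Tendsto (fun k => (1 - s / t k) • u₀ + (s / t k) • u k) atTop
      (𝓝 (u₀ + s • dv)) := by
    have hA : Tendsto (fun k => (1 - s / t k) • u₀) atTop (𝓝 u₀) := by
      have : Tendsto (fun k => (1 - s / t k)) atTop (𝓝 1) := by
        simpa using tendsto_const_nhds.sub h0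
      simpa using this.smul_const u₀
    have hB : Tendsto (fun k => (s / t k) • u k) atTop (𝓝 (s • dv)) := by
      have : ∀ k, (s / t k) • u k = s • ((t k)⁻¹ • u k) := fun k => by
        rw [smul_smul, div_eq_mul_inv]
      simpa [this] using hlim.const_smul s
    exact hA.add hB
  exact hUc.mem_of_tendsto hlim2 hev

/-- Key boundedness lemma from the qualification condition. -/
lemma key_bounded {B : Matrix (Fin n) (Fin m) ℝ} {R : Matrix (Fin m) (Fin m) ℝ}
    {U : Set (Fin m → ℝ)} (hR : R.PosSemidef) (hUc : IsClosed U) (hUx : Convex ℝ U)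
    (hCQ : {u : Fin m → ℝ | B *ᵥ u = 0} ∩ {u | R *ᵥ u = 0} ∩ recCone U = {0})
    (M c : ℝ) :
    IsBounded {u : Fin m → ℝ | u ∈ U ∧ ‖B *ᵥ u‖ ≤ M ∧ u ⬝ᵥ (R *ᵥ u) ≤ c} := by
  by_contra hb
  rw [isBounded_iff_forall_norm_le] at hb
  push_neg at hb
  choose u hu hnorm using fun k : ℕ => hb (k : ℝ)
  have htpos : ∀ k, 0 < ‖u k‖ := fun k => lt_of_le_of_lt (Nat.cast_nonneg k) (hnorm k)
  have ht : Tendsto (fun k => ‖u k‖) atTop atTop :=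
    tendsto_atTop_mono (fun k => (hnorm k).le) tendsto_natCast_atTop_atTop
  have hinv : Tendsto (fun k => (‖u k‖)⁻¹) atTop (𝓝 0) := ht.inv_tendsto_atTop
  have hdball : ∀ k, (‖u k‖)⁻¹ • u k ∈ Metric.closedBall (0 : Fin m → ℝ) 1 := by
    intro k
    simp [Metric.mem_closedBall, dist_zero_right, norm_smul,
      abs_of_nonneg (inv_nonneg.mpr (norm_nonneg (u k))),
      inv_mul_cancel₀ (htpos k).ne']
  obtain ⟨dv, -, φ, hφ, hdlim⟩ :=
    tendsto_subseq_of_bounded Metric.isBounded_closedBall hdball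
  have htφ : Tendsto (fun j => ‖u (φ j)‖) atTop atTop := ht.comp hφ.tendsto_atTop
  have hinvφ : Tendsto (fun j => (‖u (φ j)‖)⁻¹) atTop (𝓝 0) := htφ.inv_tendsto_atTop
  have hdnorm : ‖dv‖ = 1 := by
    have h1 : Tendsto (fun j => ‖(‖u (φ j)‖)⁻¹ • u (φ j)‖) atTop (𝓝 ‖dv‖) := hdlim.norm
    have h2 : ∀ j, ‖(‖u (φ j)‖)⁻¹ • u (φ j)‖ = 1 := by
      intro j
      rw [norm_smul, Real.norm_eq_abs, abs_of_nonneg (inv_nonneg.mpr (norm_nonneg _)),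
        inv_mul_cancel₀ (htpos (φ j)).ne']
    rw [show (fun j => ‖(‖u (φ j)‖)⁻¹ • u (φ j)‖) = fun _ => (1 : ℝ) from funext h2] at h1
    exact tendsto_nhds_unique h1 tendsto_const_nhds
  have hB0 : B *ᵥ dv = 0 := by
    have h1 : Tendsto (fun j => B *ᵥ ((‖u (φ j)‖)⁻¹ • u (φ j))) atTop (𝓝 (B *ᵥ dv)) :=
      ((contMulVec B).tendsto dv).comp hdlim
    have h2 : Tendsto (fun j => B *ᵥ ((‖u (φ j)‖)⁻¹ • u (φ j))) atTop (𝓝 0) := by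
      apply squeeze_zero_norm (a := fun j => (‖u (φ j)‖)⁻¹ * M)
      · intro j
        rw [Matrix.mulVec_smul, norm_smul, Real.norm_eq_abs,
          abs_of_nonneg (inv_nonneg.mpr (norm_nonneg _))]
        exact mul_le_mul_of_nonneg_left (hu (φ j)).2.1 (inv_nonneg.mpr (norm_nonneg _))
      · simpa using hinvφ.mul_const M
    exact tendsto_nhds_unique h1 h2
  have hR0 : R *ᵥ dv = 0 := by
    have hq : dv ⬝ᵥ (R *ᵥ dv) = 0 := by
      have h1 : Tendsto
          (fun j => ((‖u (φ j)‖)⁻¹ • u (φ j)) ⬝ᵥ (R *ᵥ ((‖u (φ j)‖)⁻¹ • u (φ j))))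
          atTop (𝓝 (dv ⬝ᵥ (R *ᵥ dv))) := ((contQuad R).tendsto dv).comp hdlim
      have heq : ∀ j, ((‖u (φ j)‖)⁻¹ • u (φ j)) ⬝ᵥ (R *ᵥ ((‖u (φ j)‖)⁻¹ • u (φ j)))
          = (‖u (φ j)‖)⁻¹ * ((‖u (φ j)‖)⁻¹ * (u (φ j) ⬝ᵥ (R *ᵥ u (φ j)))) := by
        intro j
        rw [Matrix.mulVec_smul, smul_dotProduct, dotProduct_smul,
          smul_eq_mul, smul_eq_mul]
      rw [show (fun j => ((‖u (φ j)‖)⁻¹ • u (φ j)) ⬝ᵥ (R *ᵥ ((‖u (φ j)‖)⁻¹ • u (φ j))))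
          = fun j => (‖u (φ j)‖)⁻¹ * ((‖u (φ j)‖)⁻¹ * (u (φ j) ⬝ᵥ (R *ᵥ u (φ j))))
          from funext heq] at h1
      have h2 : Tendsto
          (fun j => (‖u (φ j)‖)⁻¹ * ((‖u (φ j)‖)⁻¹ * (u (φ j) ⬝ᵥ (R *ᵥ u (φ j)))))
          atTop (𝓝 0) := by
        apply tendsto_of_tendsto_of_tendsto_of_le_of_le (g := fun _ => (0:ℝ))
          (h := fun j => (‖u (φ j)‖)⁻¹ * ((‖u (φ j)‖)⁻¹ * c)) tendsto_const_nhds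
        · simpa using hinvφ.mul (hinvφ.mul_const c)
        · intro j
          have h4 : (0:ℝ) ≤ (‖u (φ j)‖)⁻¹ := inv_nonneg.mpr (norm_nonneg _)
          exact mul_nonneg h4 (mul_nonneg h4 (quad_nonneg hR _))
        · intro j
          have h3 : u (φ j) ⬝ᵥ (R *ᵥ u (φ j)) ≤ c := (hu (φ j)).2.2
          have h4 : (0:ℝ) ≤ (‖u (φ j)‖)⁻¹ := inv_nonneg.mpr (norm_nonneg _)
          exact mul_le_mul_of_nonneg_left (mul_le_mul_of_nonneg_left h3 h4) h4
      exact tendsto_nhds_unique h1 h2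
    have := (hR.dotProduct_mulVec_zero_iff dv).mp (by simpa using hq)
    exact this
  have hrec : dv ∈ recCone U :=
    mem_recCone_of_seq hUc hUx (fun j => u (φ j)) (fun j => (hu (φ j)).1)
      (fun j => ‖u (φ j)‖) (fun j => htpos (φ j)) htφ dv hdlim
  have hmem : dv ∈ ({u : Fin m → ℝ | B *ᵥ u = 0} ∩ {u | R *ᵥ u = 0} ∩ recCone U) :=
    ⟨⟨hB0, hR0⟩, hrec⟩
  rw [hCQ] at hmem
  simp only [Set.mem_singleton_iff] at hmem
  rw [hmem] at hdnorm
  simp at hdnorm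

/-- Attainment of the infimum over the feasible set. -/
lemma attain {B : Matrix (Fin n) (Fin m) ℝ} {R : Matrix (Fin m) (Fin m) ℝ}
    {U : Set (Fin m → ℝ)} (hR : R.PosSemidef) (hUc : IsClosed U) (hUx : Convex ℝ U)
    (hCQ : {u : Fin m → ℝ | B *ᵥ u = 0} ∩ {u | R *ᵥ u = 0} ∩ recCone U = {0})
    (w : Fin n → ℝ) (hne : ∃ u, u ∈ U ∧ B *ᵥ u = w) :
    ∃ u, (u ∈ U ∧ B *ᵥ u = w) ∧
      ∀ u', u' ∈ U → B *ᵥ u' = w → u ⬝ᵥ (R *ᵥ u) ≤ u' ⬝ᵥ (R *ᵥ u') := by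
  obtain ⟨u₀, hu₀, hBu₀⟩ := hne
  set S : Set (Fin m → ℝ) :=
    (U ∩ {u | B *ᵥ u = w}) ∩ {u | u ⬝ᵥ (R *ᵥ u) ≤ u₀ ⬝ᵥ (R *ᵥ u₀)} with hS
  have hSne : S.Nonempty := ⟨u₀, ⟨⟨hu₀, hBu₀⟩, (by exact Set.mem_setOf_eq ▸ le_refl (u₀ ⬝ᵥ (R *ᵥ u₀)) : u₀ ∈ {u : Fin m → ℝ | u ⬝ᵥ (R *ᵥ u) ≤ u₀ ⬝ᵥ (R *ᵥ u₀)})⟩⟩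
  have hSc : IsClosed S :=
    (hUc.inter (isClosed_eq (contMulVec B) continuous_const)).inter
      (isClosed_le (contQuad R) continuous_const)
  have hSb : IsBounded S := by
    apply (key_bounded hR hUc hUx hCQ ‖w‖ (u₀ ⬝ᵥ (R *ᵥ u₀))).subset
    rintro u ⟨⟨huU, huB⟩, hq⟩
    exact ⟨huU, by rw [huB], hq⟩
  have hScomp : IsCompact S := Metric.isCompact_of_isClosed_isBounded hSc hSb
  obtain ⟨u, huS, hmin⟩ := hScomp.exists_isMinOn hSne (contQuad R).continuousOn
  refine ⟨u, huS.1, fun u' h1 h2 => ?_⟩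
  rcases le_or_gt (u' ⬝ᵥ (R *ᵥ u')) (u₀ ⬝ᵥ (R *ᵥ u₀)) with h | h
  · exact isMinOn_iff.mp hmin u' ⟨⟨h1, h2⟩, h⟩
  · exact le_trans (isMinOn_iff.mp hmin u₀ ⟨⟨hu₀, hBu₀⟩, (by exact Set.mem_setOf_eq ▸ le_refl (u₀ ⬝ᵥ (R *ᵥ u₀)) : u₀ ∈ {u : Fin m → ℝ | u ⬝ᵥ (R *ᵥ u) ≤ u₀ ⬝ᵥ (R *ᵥ u₀)})⟩) h.le

/-- The marginal infimum as a function of the right-hand side. -/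
def hinfE {n m : ℕ} (B : Matrix (Fin n) (Fin m) ℝ) (R : Matrix (Fin m) (Fin m) ℝ)
    (U : Set (Fin m → ℝ)) (w : Fin n → ℝ) : EReal :=
  ⨅ u : {u : Fin m → ℝ // u ∈ U ∧ B *ᵥ u = w},
    (((1 / 2 : ℝ) * (u.1 ⬝ᵥ (R *ᵥ u.1)) : ℝ) : EReal)

lemma hinfE_nonneg {B : Matrix (Fin n) (Fin m) ℝ} {R : Matrix (Fin m) (Fin m) ℝ}
    {U : Set (Fin m → ℝ)} (hR : R.PosSemidef) (w : Fin n → ℝ) : 0 ≤ hinfE B R U w :=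
  by
  refine le_iInf fun u => ?_
  have h := mul_nonneg (by norm_num : (0:ℝ) ≤ 1/2) (quad_nonneg hR u.1)
  exact_mod_cast h

lemma hinfE_top {B : Matrix (Fin n) (Fin m) ℝ} {R : Matrix (Fin m) (Fin m) ℝ}
    {U : Set (Fin m → ℝ)} {w : Fin n → ℝ} (h : ¬ ∃ u, u ∈ U ∧ B *ᵥ u = w) :
    hinfE B R U w = ⊤ := by
  have : IsEmpty {u : Fin m → ℝ // u ∈ U ∧ B *ᵥ u = w} := ⟨fun u => h ⟨u.1, u.2⟩⟩
  exact iInf_of_empty _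

lemma hinfE_eq_of_min {B : Matrix (Fin n) (Fin m) ℝ} {R : Matrix (Fin m) (Fin m) ℝ}
    {U : Set (Fin m → ℝ)} {w : Fin n → ℝ} {u : Fin m → ℝ} (hu : u ∈ U ∧ B *ᵥ u = w)
    (hmin : ∀ u', u' ∈ U → B *ᵥ u' = w → u ⬝ᵥ (R *ᵥ u) ≤ u' ⬝ᵥ (R *ᵥ u')) :
    hinfE B R U w = (((1 / 2 : ℝ) * (u ⬝ᵥ (R *ᵥ u)) : ℝ) : EReal) := by
  apply le_antisymm
  · exact iInf_le (fun v : {u' : Fin m → ℝ // u' ∈ U ∧ B *ᵥ u' = w} =>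
      (((1 / 2 : ℝ) * (v.1 ⬝ᵥ (R *ᵥ v.1)) : ℝ) : EReal)) ⟨u, hu⟩
  · refine le_iInf fun u' => ?_
    have h := hmin u'.1 u'.2.1 u'.2.2
    have h2 := mul_le_mul_of_nonneg_left h (by norm_num : (0:ℝ) ≤ 1/2)
    exact_mod_cast h2

lemma hinfE_lsc {B : Matrix (Fin n) (Fin m) ℝ} {R : Matrix (Fin m) (Fin m) ℝ}
    {U : Set (Fin m → ℝ)} (hR : R.PosSemidef) (hUc : IsClosed U) (hUx : Convex ℝ U)
    (hCQ : {u : Fin m → ℝ | B *ᵥ u = 0} ∩ {u | R *ᵥ u = 0} ∩ recCone U = {0}) :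
    LowerSemicontinuous (hinfE B R U) := by
  intro w₀ y hy
  induction y using EReal.rec with
  | bot =>
    filter_upwards with w
    exact lt_of_lt_of_le (by simp : (⊥ : EReal) < 0) (hinfE_nonneg hR w)
  | top => exact absurd hy (by simp)
  | coe c =>
    by_contra hcon
    rw [Filter.not_eventually] at hcon
    obtain ⟨w, hwt, hwp⟩ := Filter.frequently_iff_seq_forall.mp hcon
    have hle : ∀ k, hinfE B R U (w k) ≤ (c : EReal) := fun k => not_lt.mp (hwp k)
    have hfk : ∀ k, ∃ u, u ∈ U ∧ B *ᵥ u = w k := by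
      intro k
      by_contra h
      have hk := hle k
      rw [hinfE_top h] at hk
      exact absurd hk (by simp)
    choose u hfeas hmin using fun k => attain hR hUc hUx hCQ (w k) (hfk k)
    have hval : ∀ k, hinfE B R U (w k)
        = (((1 / 2 : ℝ) * (u k ⬝ᵥ (R *ᵥ u k)) : ℝ) : EReal) :=
      fun k => hinfE_eq_of_min (hfeas k) (hmin k)
    have hqle : ∀ k, u k ⬝ᵥ (R *ᵥ u k) ≤ 2 * c := by
      intro k
      have := hle k
      rw [hval k] at this
      have h2 : (1 / 2 : ℝ) * (u k ⬝ᵥ (R *ᵥ u k)) ≤ c := by exact_mod_cast this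
      linarith
    obtain ⟨M, hM⟩ := hwt.norm.bddAbove_range
    have hMw : ∀ k, ‖w k‖ ≤ M := fun k => hM (Set.mem_range_self k)
    have hmemK : ∀ k, u k ∈ {u : Fin m → ℝ | u ∈ U ∧ ‖B *ᵥ u‖ ≤ M ∧ u ⬝ᵥ (R *ᵥ u) ≤ 2 * c} :=
      fun k => ⟨(hfeas k).1, by rw [(hfeas k).2]; exact hMw k, hqle k⟩
    obtain ⟨ubar, -, φ, hφ, hulim⟩ :=
      tendsto_subseq_of_bounded (key_bounded hR hUc hUx hCQ M (2 * c)) hmemK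
    have hubarU : ubar ∈ U :=
      hUc.mem_of_tendsto hulim (Filter.Eventually.of_forall fun j => (hfeas (φ j)).1)
    have hBubar : B *ᵥ ubar = w₀ := by
      have h1 : Tendsto (fun j => B *ᵥ u (φ j)) atTop (𝓝 (B *ᵥ ubar)) :=
        ((contMulVec B).tendsto ubar).comp hulim
      have h2 : Tendsto (fun j => B *ᵥ u (φ j)) atTop (𝓝 w₀) := by
        have : (fun j => B *ᵥ u (φ j)) = fun j => w (φ j) :=
          funext fun j => (hfeas (φ j)).2
        rw [this]
        exact hwt.comp hφ.tendsto_atTop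
      exact tendsto_nhds_unique h1 h2
    have hqubar : ubar ⬝ᵥ (R *ᵥ ubar) ≤ 2 * c := by
      have h1 : Tendsto (fun j => u (φ j) ⬝ᵥ (R *ᵥ u (φ j))) atTop (𝓝 (ubar ⬝ᵥ (R *ᵥ ubar))) :=
        ((contQuad R).tendsto ubar).comp hulim
      exact le_of_tendsto h1 (Filter.Eventually.of_forall fun j => hqle (φ j))
    have hfin : hinfE B R U w₀ ≤ (c : EReal) := by
      calc hinfE B R U w₀ ≤ (((1 / 2 : ℝ) * (ubar ⬝ᵥ (R *ᵥ ubar)) : ℝ) : EReal) :=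
            iInf_le (fun v : {u' : Fin m → ℝ // u' ∈ U ∧ B *ᵥ u' = w₀} =>
              (((1 / 2 : ℝ) * (v.1 ⬝ᵥ (R *ᵥ v.1)) : ℝ) : EReal)) ⟨ubar, hubarU, hBubar⟩
        _ ≤ (c : EReal) := by exact_mod_cast (by linarith : (1/2:ℝ) * (ubar ⬝ᵥ (R *ᵥ ubar)) ≤ c)
    exact absurd hy (not_lt.mpr hfin)

lemma indE_nonneg {α : Type*} (S : Set α) (x : α) : 0 ≤ indE S x := by
  unfold indE
  split <;> simp

lemma indE_lsc {α : Type*} [TopologicalSpace α] {S : Set α} (hS : IsClosed S) :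
    LowerSemicontinuous (indE S) := by
  intro x y hy
  by_cases hx : x ∈ S
  · have h0 : indE S x = 0 := by simp [indE, hx]
    rw [h0] at hy
    filter_upwards with w
    exact lt_of_lt_of_le hy (indE_nonneg S w)
  · filter_upwards [hS.isOpen_compl.mem_nhds hx] with w hw
    have hw' : w ∉ S := hw
    have : indE S w = ⊤ := by simp [indE, hw']
    rw [this]
    have hxt : indE S x = ⊤ := by simp [indE, hx]
    rw [hxt] at hy
    exact hy

lemma iInf_subtype_eq {α : Type*} (p q : α → Prop) (h : ∀ x, p x ↔ q x) (f : α → EReal) :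
    ⨅ u : {u // p u}, f u.1 = ⨅ u : {u // q u}, f u.1 := by
  apply le_antisymm
  · exact le_iInf fun u => iInf_le (fun v : {u // p u} => f v.1) ⟨u.1, (h u.1).mpr u.2⟩
  · exact le_iInf fun u => iInf_le (fun v : {u // q u} => f v.1) ⟨u.1, (h u.1).mp u.2⟩

lemma lqL_eq {n m : ℕ} (A : Matrix (Fin n) (Fin n) ℝ) (B : Matrix (Fin n) (Fin m) ℝ)
    (d : Fin n → ℝ) (Q : Matrix (Fin n) (Fin n) ℝ) (R : Matrix (Fin m) (Fin m) ℝ)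
    (X : Set (Fin n → ℝ)) (U : Set (Fin m → ℝ)) (x v : Fin n → ℝ) :
    lqL A B d Q R X U x v =
      (((1 / 2 : ℝ) * (x ⬝ᵥ (Q *ᵥ x)) : ℝ) : EReal) + indE X x +
        hinfE B R U (v - A *ᵥ x - d) := by
  unfold lqL hinfE
  have hiff : ∀ u, (u ∈ U ∧ v = A *ᵥ x + B *ᵥ u + d) ↔
      (u ∈ U ∧ B *ᵥ u = v - A *ᵥ x - d) := by
    intro u
    refine and_congr_right fun _ => ?_
    constructor
    · intro h; rw [h]; abel
    · intro h; rw [h]; abel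
  exact congrArg ((((1 / 2 : ℝ) * (x ⬝ᵥ (Q *ᵥ x)) : ℝ) : EReal) + indE X x + ·)
    (iInf_subtype_eq _ _ hiff
      (fun z => (((1 / 2 : ℝ) * (z ⬝ᵥ (R *ᵥ z)) : ℝ) : EReal)))

end Aux

/-- Under the qualification condition (CQ)
`ker B ∩ ker R ∩ U_∞ = {0}`, the infimum in the definition of the LQ Lagrangian is
attained whenever it is finite, and the Lagrangian is lower semicontinuous. -/
theorem lq_lagrangian_attainment_and_lsc (n m : ℕ)
    (A : Matrix (Fin n) (Fin n) ℝ) (B : Matrix (Fin n) (Fin m) ℝ) (d : Fin n → ℝ)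
    (Q : Matrix (Fin n) (Fin n) ℝ) (R : Matrix (Fin m) (Fin m) ℝ)
    (hQ : Q.PosSemidef) (hR : R.PosSemidef)
    (X : Set (Fin n → ℝ)) (U : Set (Fin m → ℝ))
    (hX : X.Nonempty ∧ IsClosed X ∧ Convex ℝ X)
    (hU : U.Nonempty ∧ IsClosed U ∧ Convex ℝ U)
    (hCQ : {u : Fin m → ℝ | B *ᵥ u = 0} ∩ {u | R *ᵥ u = 0} ∩ recCone U = {0}) :
    (∀ x v : Fin n → ℝ, (∃ r : ℝ, lqL A B d Q R X U x v = (r : EReal)) →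
        ∃ u, u ∈ U ∧ v = A *ᵥ x + B *ᵥ u + d ∧
          lqL A B d Q R X U x v
            = (((1 / 2 : ℝ) * (x ⬝ᵥ (Q *ᵥ x)) + (1 / 2 : ℝ) * (u ⬝ᵥ (R *ᵥ u)) : ℝ) : EReal)) ∧
    LowerSemicontinuous (fun q : (Fin n → ℝ) × (Fin n → ℝ) => lqL A B d Q R X U q.1 q.2) := by
  obtain ⟨hXne, hXc, hXx⟩ := hX
  obtain ⟨hUne, hUc, hUx⟩ := hU
  constructor
  · rintro x v ⟨r, hr⟩
    rw [lqL_eq] at hr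
    set w := v - A *ᵥ x - d with hw
    -- x ∈ X
    have hxX : x ∈ X := by
      by_contra hx
      have hind : indE X x = ⊤ := by simp [indE, hx]
      rw [hind, EReal.add_top_of_ne_bot (EReal.coe_ne_bot _),
        EReal.top_add_of_ne_bot (ereal_ne_bot_of_nonneg (hinfE_nonneg hR w))] at hr
      exact absurd hr.symm (EReal.coe_ne_top r)
    have hind0 : indE X x = 0 := by simp [indE, hxX]
    -- feasibility
    have hfeas : ∃ u, u ∈ U ∧ B *ᵥ u = w := by
      by_contra h
      rw [hinfE_top h, EReal.add_top_of_ne_bot] at hr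
      · exact absurd hr.symm (EReal.coe_ne_top r)
      · rw [Ne, EReal.add_eq_bot_iff]
        push_neg
        exact ⟨EReal.coe_ne_bot _, ereal_ne_bot_of_nonneg (indE_nonneg X x)⟩
    obtain ⟨u, hu, hmin⟩ := attain hR hUc hUx hCQ w hfeas
    refine ⟨u, hu.1, ?_, ?_⟩
    · rw [hu.2, hw]; abel
    · rw [lqL_eq, hind0, hinfE_eq_of_min hu hmin, add_zero, ← EReal.coe_add]
  · have hfun : (fun q : (Fin n → ℝ) × (Fin n → ℝ) => lqL A B d Q R X U q.1 q.2)
        = fun q => (((1 / 2 : ℝ) * (q.1 ⬝ᵥ (Q *ᵥ q.1)) : ℝ) : EReal) + indE X q.1 +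
            hinfE B R U (q.2 - A *ᵥ q.1 - d) :=
      funext fun q => lqL_eq A B d Q R X U q.1 q.2
    rw [hfun]
    have hlsc1 : LowerSemicontinuous
        (fun q : (Fin n → ℝ) × (Fin n → ℝ) =>
          (((1 / 2 : ℝ) * (q.1 ⬝ᵥ (Q *ᵥ q.1)) : ℝ) : EReal)) :=
      (continuous_coe_real_ereal.comp
        (continuous_const.mul ((contQuad Q).comp continuous_fst))).lowerSemicontinuous
    have hlsc2 : LowerSemicontinuous
        (fun q : (Fin n → ℝ) × (Fin n → ℝ) => indE X q.1) := by
      intro q y hy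
      exact (continuous_fst.tendsto q).eventually (indE_lsc hXc q.1 y hy)
    have hψ : Continuous (fun q : (Fin n → ℝ) × (Fin n → ℝ) => q.2 - A *ᵥ q.1 - d) :=
      (continuous_snd.sub ((contMulVec A).comp continuous_fst)).sub continuous_const
    have hlsc3 : LowerSemicontinuous
        (fun q : (Fin n → ℝ) × (Fin n → ℝ) => hinfE B R U (q.2 - A *ᵥ q.1 - d)) := by
      intro q y hy
      exact (hψ.tendsto q).eventually (hinfE_lsc hR hUc hUx hCQ _ y hy)
    have h12 : LowerSemicontinuous
        (fun q : (Fin n → ℝ) × (Fin n → ℝ) =>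
          (((1 / 2 : ℝ) * (q.1 ⬝ᵥ (Q *ᵥ q.1)) : ℝ) : EReal) + indE X q.1) := by
      apply hlsc1.add' hlsc2
      intro q
      exact EReal.continuousAt_add (Or.inl (EReal.coe_ne_top _)) (Or.inl (EReal.coe_ne_bot _))
    apply h12.add' hlsc3
    intro q
    apply EReal.continuousAt_add
    · exact Or.inr (ereal_ne_bot_of_nonneg (hinfE_nonneg hR _))
    · left
      rw [Ne, EReal.add_eq_bot_iff]
      push_neg
      exact ⟨EReal.coe_ne_bot _, ereal_ne_bot_of_nonneg (indE_nonneg X q.1)⟩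

end
end

section
/- Dual Lagrangian of the linear-quadratic problem: for the LQ Lagrangian L(t+1, x, v) = (1/2)‖x‖²_{Q_t} + δ_{𝒳_t}(x) + inf_{u ∈ 𝒰_t} { (1/2)‖u‖²_{R_t} : v = A_t x + B_t u + φ_t }, the dual Lagrangian K(t+1, p, w) := sup_{x,v∈ℝⁿ} { x·w + v·p − L(t+1, x, v) } satisfies, for all p, w ∈ ℝⁿ, K(t+1, p, w) = sup_{x ∈ 𝒳_t} { x·(A_tᵀp + w) − (1/2)‖x‖²_{Q_t} } + sup_{u ∈ 𝒰_t} { u·(B_tᵀp) − (1/2)‖u‖²_{R_t} } + φ_t·p. -/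
open Matrix

noncomputable section

private lemma iSup_add_iSup' {ι κ : Sort*} (f : ι → EReal) (g : κ → EReal) :
    (⨆ i, f i) + ⨆ j, g j = ⨆ i, ⨆ j, f i + g j := by
  refine le_antisymm ?_ (iSup_le fun i => iSup_le fun j =>
    add_le_add (le_iSup f i) (le_iSup g j))
  refine EReal.add_le_of_forall_lt fun a ha b hb => ?_
  obtain ⟨i, hi⟩ := lt_iSup_iff.mp ha
  obtain ⟨j, hj⟩ := lt_iSup_iff.mp hb
  exact le_iSup_of_le i (le_iSup_of_le j (add_le_add hi.le hj.le))

private lemma add_iSup' {ι : Sort*} (c : EReal) (f : ι → EReal) :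
    c + ⨆ i, f i = ⨆ i, c + f i := by
  have h := iSup_add_iSup' (fun _ : Unit => c) f
  simpa using h

private lemma iSup_add' {ι : Sort*} (c : EReal) (f : ι → EReal) :
    (⨆ i, f i) + c = ⨆ i, f i + c := by
  rw [add_comm, add_iSup' c f]
  exact iSup_congr fun i => add_comm _ _

private lemma neg_iInf' {ι : Sort*} (f : ι → EReal) : -(⨅ i, f i) = ⨆ i, -f i := by
  refine le_antisymm ?_ (iSup_le fun i => ?_)
  · rw [EReal.neg_le]
    exact le_iInf fun i => EReal.neg_le.mpr (le_iSup (fun i => -f i) i)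
  · rw [EReal.neg_le, neg_neg]
    exact iInf_le f i

private lemma coe_sub_iInf' {ι : Sort*} (a : ℝ) (f : ι → EReal) :
    (a : EReal) - ⨅ i, f i = ⨆ i, ((a : EReal) - f i) := by
  rw [sub_eq_add_neg, neg_iInf', add_iSup']
  exact iSup_congr fun i => (sub_eq_add_neg _ _).symm

private lemma coe_sub_coe_add' (a r : ℝ) (I : EReal) :
    (a : EReal) - ((r : EReal) + I) = ((a - r : ℝ) : EReal) - I := by
  induction I using EReal.rec with
  | bot => simp [EReal.add_bot, ← EReal.coe_sub, EReal.coe_sub_bot]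
  | coe x =>
      rw [← EReal.coe_add, ← EReal.coe_sub, ← EReal.coe_sub, EReal.coe_eq_coe_iff]
      ring
  | top => simp [EReal.coe_add_top, EReal.sub_top]

private lemma iSup_eq_iSup_subtype' {α : Type*} (S : Set α) (f : α → EReal)
    (h : ∀ x ∉ S, f x = ⊥) : (⨆ x, f x) = ⨆ x : {y // y ∈ S}, f x.1 := by
  refine le_antisymm (iSup_le fun x => ?_) (iSup_le fun x => le_iSup_of_le x.1 le_rfl)
  by_cases hx : x ∈ S
  · exact le_iSup_of_le ⟨x, hx⟩ le_rfl
  · simp [h x hx]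

/-- **Dual Lagrangian of the LQ problem.** For the LQ Lagrangian, the dual
Lagrangian satisfies
`K(p,w) = sup_{x∈𝒳}{x·(Aᵀp+w) − ½‖x‖²_Q} + sup_{u∈𝒰}{u·(Bᵀp) − ½‖u‖²_R} + φ·p`. -/
theorem lq_dual_lagrangian (n m : ℕ)
    (A : Matrix (Fin n) (Fin n) ℝ) (B : Matrix (Fin n) (Fin m) ℝ) (d : Fin n → ℝ)
    (Q : Matrix (Fin n) (Fin n) ℝ) (R : Matrix (Fin m) (Fin m) ℝ)
    (hQ : Q.PosSemidef) (hR : R.PosSemidef)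
    (X : Set (Fin n → ℝ)) (U : Set (Fin m → ℝ))
    (hX : X.Nonempty ∧ IsClosed X ∧ Convex ℝ X)
    (hU : U.Nonempty ∧ IsClosed U ∧ Convex ℝ U)
    (p w : Fin n → ℝ) :
    dualLag (lqL A B d Q R X U) p w
      = (⨆ x : {y : Fin n → ℝ // y ∈ X},
            ((x.1 ⬝ᵥ (Aᵀ *ᵥ p + w) - (1 / 2 : ℝ) * (x.1 ⬝ᵥ (Q *ᵥ x.1)) : ℝ) : EReal))
        + (⨆ u : {z : Fin m → ℝ // z ∈ U},
            ((u.1 ⬝ᵥ (Bᵀ *ᵥ p) - (1 / 2 : ℝ) * (u.1 ⬝ᵥ (R *ᵥ u.1)) : ℝ) : EReal))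
        + ((d ⬝ᵥ p : ℝ) : EReal) := by
  classical
  have hs0 : ∀ u : Fin m → ℝ, (0 : ℝ) ≤ (1 / 2 : ℝ) * (u ⬝ᵥ (R *ᵥ u)) := by
    intro u
    have h := hR.dotProduct_mulVec_nonneg u
    simp only [star_trivial] at h
    linarith
  -- the inner supremum vanishes off X
  have hbot : ∀ x ∉ X,
      (⨆ v : Fin n → ℝ, ((x ⬝ᵥ w + v ⬝ᵥ p : ℝ) : EReal) - lqL A B d Q R X U x v) = ⊥ := by
    intro x hx
    refine iSup_eq_bot.mpr fun v => ?_
    have hL : lqL A B d Q R X U x v = ⊤ := by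
      unfold lqL
      simp only [indE, if_neg hx, EReal.coe_add_top]
      refine EReal.top_add_of_ne_bot ?_
      have h0 : (0 : EReal) ≤ ⨅ u : {u : Fin m → ℝ // u ∈ U ∧ v = A *ᵥ x + B *ᵥ u + d},
          (((1 / 2 : ℝ) * (u.1 ⬝ᵥ (R *ᵥ u.1)) : ℝ) : EReal) :=
        le_iInf fun u => by exact_mod_cast hs0 u.1
      intro hb
      rw [hb] at h0
      exact absurd h0 (by simp)
    rw [hL, EReal.sub_top]
  -- computation of the inner supremum on X
  have hmem : ∀ x, x ∈ X →
      (⨆ v : Fin n → ℝ, ((x ⬝ᵥ w + v ⬝ᵥ p : ℝ) : EReal) - lqL A B d Q R X U x v)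
        = ⨆ u : {z : Fin m → ℝ // z ∈ U},
            ((x ⬝ᵥ w + (A *ᵥ x + B *ᵥ u.1 + d) ⬝ᵥ p
              - (1 / 2 : ℝ) * (x ⬝ᵥ (Q *ᵥ x))
              - (1 / 2 : ℝ) * (u.1 ⬝ᵥ (R *ᵥ u.1)) : ℝ) : EReal) := by
    intro x hx
    have hstep : ∀ v : Fin n → ℝ,
        ((x ⬝ᵥ w + v ⬝ᵥ p : ℝ) : EReal) - lqL A B d Q R X U x v
          = ⨆ u : {u : Fin m → ℝ // u ∈ U ∧ v = A *ᵥ x + B *ᵥ u + d},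
              ((x ⬝ᵥ w + v ⬝ᵥ p - (1 / 2 : ℝ) * (x ⬝ᵥ (Q *ᵥ x))
                - (1 / 2 : ℝ) * (u.1 ⬝ᵥ (R *ᵥ u.1)) : ℝ) : EReal) := by
      intro v
      unfold lqL
      simp only [indE, if_pos hx, add_zero]
      rw [coe_sub_coe_add', coe_sub_iInf']
      exact iSup_congr fun u => by norm_cast
    rw [iSup_congr hstep]
    refine le_antisymm (iSup_le fun v => iSup_le fun u => ?_) (iSup_le fun u => ?_)
    · obtain ⟨u, hu, hv⟩ := u
      subst hv
      exact le_iSup_of_le ⟨u, hu⟩ le_rfl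
    · exact le_iSup_of_le (A *ᵥ x + B *ᵥ u.1 + d)
        (le_iSup_of_le ⟨u.1, u.2, rfl⟩ le_rfl)
  have key : dualLag (lqL A B d Q R X U) p w
      = ⨆ x : {y : Fin n → ℝ // y ∈ X}, ⨆ u : {z : Fin m → ℝ // z ∈ U},
          ((x.1 ⬝ᵥ w + (A *ᵥ x.1 + B *ᵥ u.1 + d) ⬝ᵥ p
            - (1 / 2 : ℝ) * (x.1 ⬝ᵥ (Q *ᵥ x.1))
            - (1 / 2 : ℝ) * (u.1 ⬝ᵥ (R *ᵥ u.1)) : ℝ) : EReal) := by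
    have h1 : dualLag (lqL A B d Q R X U) p w
        = ⨆ x : {y : Fin n → ℝ // y ∈ X}, ⨆ v : Fin n → ℝ,
            ((x.1 ⬝ᵥ w + v ⬝ᵥ p : ℝ) : EReal) - lqL A B d Q R X U x.1 v := by
      unfold dualLag
      exact iSup_eq_iSup_subtype' X _ hbot
    rw [h1]
    exact iSup_congr fun x => hmem x.1 x.2
  rw [key, iSup_add_iSup', iSup_add']
  refine iSup_congr fun x => ?_
  rw [iSup_add']
  refine iSup_congr fun u => ?_
  rw [← EReal.coe_add, ← EReal.coe_add, EReal.coe_eq_coe_iff]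
  rw [dotProduct_add x.1 (Aᵀ *ᵥ p) w,
      Matrix.dotProduct_mulVec x.1 Aᵀ p, Matrix.vecMul_transpose A x.1,
      Matrix.dotProduct_mulVec u.1 Bᵀ p, Matrix.vecMul_transpose B u.1,
      add_dotProduct, add_dotProduct]
  ring


end
end

section
/- Feasible velocity set for the linear-convex problem with mixed constraints: under assumption (A), for the Lagrangian L_{t+1}(x, v) := inf_{u ∈ ℝ^m} { ℓ_t(x, u) + δ_{𝒰_t}(u) + δ_{D_t}(x, u) + δ_{S_t}(x, u, v) } + δ_{𝒳_t}(x), the set Γ_L(t+1, x) := { v ∈ ℝⁿ : L_{t+1}(x, v) ∈ ℝ } satisfies: Γ_L(t+1, x) = ∅ if x ∉ 𝒳_t, and for x ∈ 𝒳_t, Γ_L(t+1, x) = B_t( 𝒰_t ∩ { u : f_t(x,u) ≤ 0 } ) + A_t x + φ_t; consequently 𝐗(t+1) := { x : Γ_L(t+1, x) ≠ ∅ } = 𝒳_t ∩ { x : there exists u ∈ 𝒰_t with f_t(x,u) ≤ 0 }, which is a convex set. -/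
open Matrix

noncomputable section

/-- The Lagrangian of the linear-convex problem with mixed constraints:
`L(x,v) = inf_{u∈ℝᵐ} { ℓ(x,u) + δ_𝒰(u) + δ_D(x,u) + δ_S(x,u,v) } + δ_𝒳(x)`, where
`D = {(x,u) : f(x,u) ≤ 0}` and `S = {(x,u,v) : v = A x + B u + φ}`. -/
def mixL {n m : ℕ} (A : Matrix (Fin n) (Fin n) ℝ) (B : Matrix (Fin n) (Fin m) ℝ)
    (d : Fin n → ℝ) (l : (Fin n → ℝ) → (Fin m → ℝ) → ℝ)
    (f : (Fin n → ℝ) → (Fin m → ℝ) → ℝ)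
    (X : Set (Fin n → ℝ)) (U : Set (Fin m → ℝ)) (x v : Fin n → ℝ) : EReal :=
  (⨅ u : Fin m → ℝ,
      ((l x u : ℝ) : EReal) + indE U u
        + indE {q : (Fin n → ℝ) × (Fin m → ℝ) | f q.1 q.2 ≤ 0} (x, u)
        + indE {q : (Fin n → ℝ) × (Fin m → ℝ) × (Fin n → ℝ) |
            q.2.2 = A *ᵥ q.1 + B *ᵥ q.2.1 + d} (x, u, v))
    + indE X x

/-- Assumption (A): there is an upper semicontinuous function `ψ` bounding the norm of
all feasible controls: `sup{|u| : u ∈ 𝒰, f(x,u) ≤ 0} ≤ ψ(x)` for every `x ∈ 𝒳`. -/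
def AssumptionA {n m : ℕ} (f : (Fin n → ℝ) → (Fin m → ℝ) → ℝ)
    (X : Set (Fin n → ℝ)) (U : Set (Fin m → ℝ)) : Prop :=
  ∃ ψ : (Fin n → ℝ) → ℝ, UpperSemicontinuous ψ ∧
    ∀ x ∈ X, ∀ u ∈ U, f x u ≤ 0 → Real.sqrt (u ⬝ᵥ u) ≤ ψ x

/-- **Feasible velocity set for the linear-convex problem with mixed
constraints.** Under assumption (A), `Γ_L(x) := {v : L(x,v) ∈ ℝ}` is empty for `x ∉ 𝒳`,
equals `B(𝒰 ∩ {u : f(x,u) ≤ 0}) + A x + φ` for `x ∈ 𝒳`, and consequently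
`𝐗 := {x : Γ_L(x) ≠ ∅} = 𝒳 ∩ {x : ∃ u ∈ 𝒰, f(x,u) ≤ 0}`, which is convex. -/
theorem mixed_feasible_velocity_set (n m : ℕ)
    (A : Matrix (Fin n) (Fin n) ℝ) (B : Matrix (Fin n) (Fin m) ℝ) (d : Fin n → ℝ)
    (l : (Fin n → ℝ) → (Fin m → ℝ) → ℝ) (f : (Fin n → ℝ) → (Fin m → ℝ) → ℝ)
    (hl : ConvexOn ℝ Set.univ (fun q : (Fin n → ℝ) × (Fin m → ℝ) => l q.1 q.2))
    (hf : ConvexOn ℝ Set.univ (fun q : (Fin n → ℝ) × (Fin m → ℝ) => f q.1 q.2))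
    (X : Set (Fin n → ℝ)) (U : Set (Fin m → ℝ))
    (hX : X.Nonempty ∧ IsClosed X ∧ Convex ℝ X)
    (hU : U.Nonempty ∧ IsClosed U ∧ Convex ℝ U)
    (hA : AssumptionA f X U) :
    (∀ x : Fin n → ℝ, x ∉ X →
        {v : Fin n → ℝ | ∃ r : ℝ, mixL A B d l f X U x v = (r : EReal)} = ∅) ∧
    (∀ x ∈ X,
        {v : Fin n → ℝ | ∃ r : ℝ, mixL A B d l f X U x v = (r : EReal)}
          = {v : Fin n → ℝ | ∃ u ∈ U, f x u ≤ 0 ∧ v = B *ᵥ u + A *ᵥ x + d}) ∧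
    {x : Fin n → ℝ |
        {v : Fin n → ℝ | ∃ r : ℝ, mixL A B d l f X U x v = (r : EReal)}.Nonempty}
      = X ∩ {x : Fin n → ℝ | ∃ u ∈ U, f x u ≤ 0} ∧
    Convex ℝ (X ∩ {x : Fin n → ℝ | ∃ u ∈ U, f x u ≤ 0}) := by

  classical
  obtain ⟨ψ, -, hψb⟩ := hA
  obtain ⟨-, hXc, hXconv⟩ := hX
  obtain ⟨-, hUc, hUconv⟩ := hU
  have hfc : Continuous fun q : (Fin n → ℝ) × (Fin m → ℝ) => f q.1 q.2 :=
    continuousOn_univ.1 (hf.continuousOn isOpen_univ)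
  have hlc : Continuous fun q : (Fin n → ℝ) × (Fin m → ℝ) => l q.1 q.2 :=
    continuousOn_univ.1 (hl.continuousOn isOpen_univ)
  -- the summand of the infimum
  have hsum : ∀ (x v u : _), (((l x u : ℝ) : EReal) + indE U u
        + indE {q : (Fin n → ℝ) × (Fin m → ℝ) | f q.1 q.2 ≤ 0} (x, u)
        + indE {q : (Fin n → ℝ) × (Fin m → ℝ) × (Fin n → ℝ) |
            q.2.2 = A *ᵥ q.1 + B *ᵥ q.2.1 + d} (x, u, v))
      = if u ∈ U ∧ f x u ≤ 0 ∧ v = A *ᵥ x + B *ᵥ u + d then ((l x u : ℝ) : EReal) else ⊤ := by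
    intro x v u
    simp only [indE, Set.mem_setOf_eq]
    by_cases h1 : u ∈ U <;> by_cases h2 : f x u ≤ 0 <;>
      by_cases h3 : v = A *ᵥ x + B *ᵥ u + d <;>
      simp only [h1, h2, h3, if_true, if_false, and_true, and_false, true_and, false_and,
        if_pos, add_zero] <;>
      simp [EReal.add_top_of_ne_bot, EReal.coe_add_top, EReal.coe_ne_bot]
  -- part 1 : x ∉ X
  have part1 : ∀ x : Fin n → ℝ, x ∉ X →
      {v : Fin n → ℝ | ∃ r : ℝ, mixL A B d l f X U x v = (r : EReal)} = ∅ := by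
    intro x hx
    ext v
    simp only [Set.mem_setOf_eq, Set.mem_empty_iff_false, iff_false, not_exists]
    intro r hr
    rw [mixL] at hr
    rw [show indE X x = (⊤ : EReal) by simp [indE, hx]] at hr
    rcases eq_or_ne (⨅ u : Fin m → ℝ,
        ((l x u : ℝ) : EReal) + indE U u
          + indE {q : (Fin n → ℝ) × (Fin m → ℝ) | f q.1 q.2 ≤ 0} (x, u)
          + indE {q : (Fin n → ℝ) × (Fin m → ℝ) × (Fin n → ℝ) |
              q.2.2 = A *ᵥ q.1 + B *ᵥ q.2.1 + d} (x, u, v)) (⊥ : EReal) with h | h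
    · rw [h, EReal.bot_add] at hr
      exact EReal.coe_ne_bot r hr.symm
    · rw [EReal.add_top_of_ne_bot h] at hr
      exact EReal.coe_ne_top r hr.symm
  -- part 2 : x ∈ X
  have part2 : ∀ x ∈ X,
      {v : Fin n → ℝ | ∃ r : ℝ, mixL A B d l f X U x v = (r : EReal)}
        = {v : Fin n → ℝ | ∃ u ∈ U, f x u ≤ 0 ∧ v = B *ᵥ u + A *ᵥ x + d} := by
    intro x hx
    ext v
    simp only [Set.mem_setOf_eq]
    rw [mixL, show indE X x = (0 : EReal) by simp [indE, hx], add_zero]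
    constructor
    · rintro ⟨r, hr⟩
      have hlt : (⨅ u : Fin m → ℝ,
          ((l x u : ℝ) : EReal) + indE U u
            + indE {q : (Fin n → ℝ) × (Fin m → ℝ) | f q.1 q.2 ≤ 0} (x, u)
            + indE {q : (Fin n → ℝ) × (Fin m → ℝ) × (Fin n → ℝ) |
                q.2.2 = A *ᵥ q.1 + B *ᵥ q.2.1 + d} (x, u, v)) < ⊤ := by
        rw [hr]; exact EReal.coe_lt_top r
      obtain ⟨u, hu⟩ := iInf_lt_iff.1 hlt
      rw [hsum x v u] at hu
      split_ifs at hu with h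
      · refine ⟨u, h.1, h.2.1, ?_⟩
        rw [h.2.2, add_comm (A *ᵥ x)]
      · exact absurd hu (lt_irrefl ⊤)
    · rintro ⟨u0, hu0U, hu0f, rfl⟩
      have hveq : B *ᵥ u0 + A *ᵥ x + d = A *ᵥ x + B *ᵥ u0 + d := by
        rw [add_comm (B *ᵥ u0)]
      -- the feasible control set is compact
      set K : Set (Fin m → ℝ) := U ∩ {u | f x u ≤ 0} with hK
      have hKclosed : IsClosed K :=
        hUc.inter (isClosed_le (hfc.comp (continuous_const.prodMk continuous_id)) continuous_const)
      have hKsub : K ⊆ Metric.closedBall 0 (ψ x) := by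
        intro u hu
        rw [Metric.mem_closedBall, dist_zero_right]
        refine le_trans ?_ (hψb x hx u hu.1 hu.2)
        rw [pi_norm_le_iff_of_nonneg (Real.sqrt_nonneg _)]
        intro i
        rw [Real.norm_eq_abs, ← Real.sqrt_sq_eq_abs (u i)]
        apply Real.sqrt_le_sqrt
        have : (u i) ^ 2 = u i * u i := sq (u i)
        rw [this]
        exact Finset.single_le_sum (f := fun j => u j * u j)
          (fun j _ => mul_self_nonneg (u j)) (Finset.mem_univ i)
      have hKcomp : IsCompact K :=
        Metric.isCompact_of_isClosed_isBounded hKclosed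
          (Metric.isBounded_closedBall.subset hKsub)
      have hu0K : u0 ∈ K := ⟨hu0U, hu0f⟩
      obtain ⟨umin, huminK, hmin⟩ := hKcomp.exists_isMinOn ⟨u0, hu0K⟩
        ((hlc.comp (continuous_const.prodMk continuous_id)).continuousOn)
      set a : EReal := ⨅ u : Fin m → ℝ,
          ((l x u : ℝ) : EReal) + indE U u
            + indE {q : (Fin n → ℝ) × (Fin m → ℝ) | f q.1 q.2 ≤ 0} (x, u)
            + indE {q : (Fin n → ℝ) × (Fin m → ℝ) × (Fin n → ℝ) |
                q.2.2 = A *ᵥ q.1 + B *ᵥ q.2.1 + d} (x, u, B *ᵥ u0 + A *ᵥ x + d) with ha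
      have hlow : ((l x umin : ℝ) : EReal) ≤ a := by
        rw [ha]
        refine le_iInf fun u => ?_
        rw [hsum x _ u]
        split_ifs with h
        · exact EReal.coe_le_coe_iff.2 (hmin ⟨h.1, h.2.1⟩)
        · exact le_top
      have hup : a ≤ ((l x u0 : ℝ) : EReal) := by
        rw [ha]
        refine iInf_le_of_le u0 ?_
        rw [hsum x _ u0, if_pos ⟨hu0U, hu0f, hveq⟩]
      have hne_top : a ≠ ⊤ := fun h => by
        rw [h] at hup; exact (EReal.coe_lt_top (l x u0)).not_ge hup
      have hne_bot : a ≠ ⊥ := fun h => by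
        rw [h] at hlow; exact (bot_lt_iff_ne_bot.2 (EReal.coe_ne_bot _)).not_ge hlow
      exact ⟨a.toReal, (EReal.coe_toReal hne_top hne_bot).symm⟩
  -- convexity
  have hconv : Convex ℝ (X ∩ {x : Fin n → ℝ | ∃ u ∈ U, f x u ≤ 0}) := by
    refine hXconv.inter ?_
    rintro x1 ⟨u1, hu1, hf1⟩ x2 ⟨u2, hu2, hf2⟩ a b haa hbb hab
    refine ⟨a • u1 + b • u2, hUconv hu1 hu2 haa hbb hab, ?_⟩
    have hmain := hf.2 (Set.mem_univ (x1, u1)) (Set.mem_univ (x2, u2)) haa hbb hab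
    simp only [Prod.smul_mk, Prod.mk_add_mk] at hmain
    calc f (a • x1 + b • x2) (a • u1 + b • u2) ≤ a * f x1 u1 + b * f x2 u2 := hmain
      _ ≤ 0 := add_nonpos (mul_nonpos_of_nonneg_of_nonpos haa hf1)
          (mul_nonpos_of_nonneg_of_nonpos hbb hf2)
  refine ⟨part1, part2, ?_, hconv⟩
  ext x
  simp only [Set.mem_setOf_eq, Set.mem_inter_iff]
  constructor
  · rintro ⟨v, hv⟩
    by_cases hx : x ∈ X
    · have hv' := (part2 x hx) ▸ hv
      obtain ⟨u, huU, huf, -⟩ := hv'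
      exact ⟨hx, u, huU, huf⟩
    · rw [part1 x hx] at hv
      exact absurd hv (Set.notMem_empty v)
  · rintro ⟨hx, u, huU, huf⟩
    refine ⟨B *ᵥ u + A *ᵥ x + d, ?_⟩
    rw [part2 x hx]
    exact ⟨u, huU, huf, rfl⟩


end
end
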